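/- arXiv:1006.1444 — 4 statements merged into one kernel-verified Lean document; each statement's English description precedes it below -/
import Mathlib

section
/- Let $M$ be a finitely generated $\mathbb{Z}^n$-graded module over $R = k[x_1,\ldots,x_n]$ with a Stanley decomposition $\mathcal{S}$ such that for every pair $(m,G) \in \mathcal{S}$, the vector $(\deg m)^+$ is square-free and $G = \{x_i : i \in \mathrm{supp}((\deg m)^+)\}$. Then the pairs of $\mathcal{S}$ can be ordered so that $\mathcal{S}$ becomes a Stanley filtration of $M$: writing $\mathcal{S} = \{(m_1,G_1),\ldots,(m_p,G_p)\}$ with $|\deg m_1| \ge \cdots \ge |\deg m_p|$ (total degrees), for each $j=1,\ldots,p$ one has $(\sum_{i=1}^j R m_i)/(\sum_{i=1}^{j-1} R m_i) \cong k[G_j](-\deg m_j)$ as $R$-modules. -/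
/-!
Common definitions: `ℤⁿ`-graded modules over `R = k[x_1, …, x_n]`, Stanley
decompositions, the Čech complex on `x_1, …, x_n` (computing local cohomology
`H^i_𝔪` and, via the standard characterization, Castelnuovo–Mumford regularity),
and `Ext^i_R(R/I, ω_R)` for a monomial ideal `I`, computed with its natural
`ℤⁿ`-grading from the Taylor complex, which is a graded free resolution of `R/I`
on a chosen set of monomial generators of `I`.
-/

open MvPolynomial

namespace Paper

variable {k : Type} [Field k] {n : ℕ}

/-- The unit vector `e j` in `ℤⁿ`. -/
def eZ (n : ℕ) (j : Fin n) : Fin n → ℤ := fun i => if i = j then 1 else 0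

section Stanley

variable (k n)
variable (M : Type) [AddCommGroup M] [Module (MvPolynomial (Fin n) k) M]
  [Module k M] [IsScalarTower k (MvPolynomial (Fin n) k) M]

/-- The `k`-subspace `k[G]m` of `M` spanned by all `u • m`, `u` a monomial in the
variables of `G`. -/
def stanleySpan (m : M) (G : Set (Fin n)) : Submodule k M :=
  Submodule.span k
    {x | ∃ u : Fin n →₀ ℕ, ↑u.support ⊆ G ∧ x = (monomial u (1 : k) : MvPolynomial (Fin n) k) • m}

/-- `k[G]m` is a Stanley space: no monomial in the variables of `G` kills `m`. -/
def IsStanleySpace (m : M) (G : Set (Fin n)) : Prop :=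
  ∀ u : Fin n →₀ ℕ, ↑u.support ⊆ G → (monomial u (1 : k) : MvPolynomial (Fin n) k) • m ≠ 0

/-- A Stanley decomposition of `M`: finitely many pairs `(m i, G i)` such that each
`k[G i](m i)` is a Stanley space and `M = ⊕ᵢ k[G i](m i)` as `k`-vector spaces. -/
def IsStanleyDecomposition {p : ℕ} (m : Fin p → M) (G : Fin p → Set (Fin n)) : Prop :=
  (∀ i, IsStanleySpace k n M (m i) (G i)) ∧
    DirectSum.IsInternal (fun i : Fin p => stanleySpan k n M (m i) (G i))

end Stanley

section PartialSpan

variable (k n)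

/-- `M⁽ʲ⁾ = R m_1 + ⋯ + R m_j`, the `R`-submodule generated by the first `j`
elements of the family `m`. -/
noncomputable def partialSpan (M : Type) [AddCommGroup M] [Module (MvPolynomial (Fin n) k) M]
    {p : ℕ} (m : Fin p → M) (j : ℕ) : Submodule (MvPolynomial (Fin n) k) M :=
  Submodule.span (MvPolynomial (Fin n) k) (m '' {i : Fin p | (i : ℕ) < j})

end PartialSpan

section Cech

variable (k n)

/-- The multiplicative set generated by the variables `x i`, `i ∈ Λ`. -/
noncomputable def varSubmonoid (Λ : Finset (Fin n)) : Submonoid (MvPolynomial (Fin n) k) :=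
  Submonoid.closure ((fun i => (X i : MvPolynomial (Fin n) k)) '' ↑Λ)

lemma varSubmonoid_mono {Λ Λ' : Finset (Fin n)} (h : Λ ⊆ Λ') :
    varSubmonoid k n Λ ≤ varSubmonoid k n Λ' :=
  Submonoid.closure_mono (Set.image_mono (by exact_mod_cast h))

variable (M : Type) [AddCommGroup M] [Module (MvPolynomial (Fin n) k) M]

/-- The localization `M_{x_Λ}` of `M` inverting the variables in `Λ`. -/
abbrev LocM (Λ : Finset (Fin n)) : Type := LocalizedModule (varSubmonoid k n Λ) M

/-- The canonical map `M_{x_Λ} → M_{x_Λ'}` for `Λ ⊆ Λ'`. -/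
noncomputable def locMap {Λ Λ' : Finset (Fin n)} (h : Λ ⊆ Λ') :
    LocM k n M Λ →ₗ[MvPolynomial (Fin n) k] LocM k n M Λ' :=
  LocalizedModule.lift _ (LocalizedModule.mkLinearMap (varSubmonoid k n Λ') M)
    (fun s => IsLocalizedModule.map_units (LocalizedModule.mkLinearMap (varSubmonoid k n Λ') M)
      ⟨(s : MvPolynomial (Fin n) k), varSubmonoid_mono k n h s.2⟩)

/-- The `j`-th term `Čʲ(M) = ⊕_{|Λ| = j} M_{x_Λ}` of the Čech complex of `M` on the
variables `x 1, …, x n`. -/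
abbrev CechTerm (j : ℕ) : Type :=
  ∀ Λ : {S : Finset (Fin n) // S.card = j}, LocM k n M Λ.1

/-- The Čech differential, an alternating sum of localization maps. -/
noncomputable def cechD (j : ℕ) :
    CechTerm k n M j →ₗ[MvPolynomial (Fin n) k] CechTerm k n M (j + 1) :=
  LinearMap.pi fun Λ' : {S : Finset (Fin n) // S.card = j + 1} =>
    ∑ l ∈ Λ'.1.attach,
      ((-1 : ℤ) ^ ((Λ'.1.filter (fun x => x < l.1)).card)) •
        ((locMap k n M (Finset.erase_subset l.1 Λ'.1)).comp
          (LinearMap.proj (⟨Λ'.1.erase l.1, by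
            rw [Finset.card_erase_of_mem l.2, Λ'.2]; rfl⟩ :
              {S : Finset (Fin n) // S.card = j})))

/-- The coboundaries in cohomological degree `i` of the Čech complex of `M`. -/
noncomputable def cechB : (i : ℕ) → Submodule (MvPolynomial (Fin n) k) (CechTerm k n M i)
  | 0 => ⊥
  | (s + 1) => LinearMap.range (cechD k n M s)

/-- The `j`-th term of the restricted Čech subcomplex `Č_F`: only the direct summands
`M_{x_Λ}` with `F ⊆ Λ` occur (in particular it vanishes for `j < |F|`). -/
def cechSub (F : Finset (Fin n)) (j : ℕ) :
    Submodule (MvPolynomial (Fin n) k) (CechTerm k n M j) where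
  carrier := {c | ∀ Λ, ¬ F ⊆ Λ.1 → c Λ = 0}
  add_mem' := fun h1 h2 Λ h => by
    have := h1 Λ h; have := h2 Λ h
    simp_all
  zero_mem' := fun Λ h => rfl
  smul_mem' := fun r c hc Λ h => by
    have := hc Λ h
    simp_all

/-- The coboundaries of the restricted subcomplex `Č_F` in cohomological degree `i`. -/
noncomputable def cechBF (F : Finset (Fin n)) :
    (i : ℕ) → Submodule (MvPolynomial (Fin n) k) (CechTerm k n M i)
  | 0 => ⊥
  | (s + 1) => Submodule.map (cechD k n M s) (cechSub k n M F s)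

end Cech

section CechGraded

variable (k n)
variable (M : Type) [AddCommGroup M] [Module (MvPolynomial (Fin n) k) M]
variable (gr : (Fin n → ℤ) → Set M)

/-- The multidegree `a` component (for the `ℤⁿ`-grading of `M` given by `gr`) of the
localization `M_{x_Λ}`: generated by fractions `m / xˢ` where `m` is homogeneous of
multidegree `b`, `xˢ` is a monomial in the variables of `Λ` and `b - s = a`. -/
noncomputable def locPiece (Λ : Finset (Fin n)) (a : Fin n → ℤ) :
    AddSubgroup (LocM k n M Λ) :=
  AddSubgroup.closure
    {y | ∃ (m : M) (b : Fin n → ℤ) (s : Fin n →₀ ℕ)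
        (hs : (monomial s (1 : k) : MvPolynomial (Fin n) k) ∈ varSubmonoid k n Λ),
          m ∈ gr b ∧ (∀ i, b i - (s i : ℤ) = a i) ∧
            y = LocalizedModule.mk m ⟨monomial s (1 : k), hs⟩}

/-- The multidegree `a` component of the `j`-th term of the Čech complex of `M`. -/
noncomputable def cechPiece (j : ℕ) (a : Fin n → ℤ) : Set (CechTerm k n M j) :=
  {c | ∀ Λ, c Λ ∈ locPiece k n M gr Λ.1 a}

/-- The total degree `t` component of the `j`-th term of the Čech complex of `M`. -/
noncomputable def cechPieceTot (j : ℕ) (t : ℤ) : AddSubgroup (CechTerm k n M j) :=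
  ⨆ (a : Fin n → ℤ) (_ : (∑ i, a i) = t), AddSubgroup.closure (cechPiece k n M gr j a)

/-- `regLE k n M gr c` says that the Castelnuovo–Mumford regularity of the graded
module `M` (with respect to the total degree `ℤ`-grading) is at most `c`; by the
standard local cohomology characterization of regularity,
`reg M = max {i + t : Hⁱ_𝔪(M)_t ≠ 0}`, where `Hⁱ_𝔪(M)` is the cohomology of the
Čech complex of `M` on `x 1, …, x n`. -/
noncomputable def regLE (c : ℤ) : Prop :=
  ∀ (i : ℕ) (t : ℤ) (z : CechTerm k n M i),
    z ∈ LinearMap.ker (cechD k n M i) → z ∈ cechPieceTot k n M gr i t →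
      z ∉ cechB k n M i → (i : ℤ) + t ≤ c

end CechGraded

section Pieces

variable (k n)

/-- The set of homogeneous polynomials of multidegree `a ∈ ℤⁿ`
(empty if some `a i < 0`). -/
def RPieceSet (a : Fin n → ℤ) : Set (MvPolynomial (Fin n) k) :=
  {g | ∃ (c : k) (s : Fin n →₀ ℕ), (∀ i, (s i : ℤ) = a i) ∧ g = monomial s c}

/-- The multidegree `a` component of the polynomial ring, as a `k`-subspace. -/
noncomputable def RPiece (a : Fin n → ℤ) : Submodule k (MvPolynomial (Fin n) k) :=
  Submodule.span k (RPieceSet k n a)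

/-- A monomial ideal: an ideal generated by monomials. -/
def IsMonomialIdeal (I : Ideal (MvPolynomial (Fin n) k)) : Prop :=
  ∃ T : Set (Fin n →₀ ℕ), I = Ideal.span ((fun s => (monomial s (1 : k))) '' T)

/-- The multidegree `a` component of `R/I`: the image of the multidegree `a`
component of `R`. -/
def quotientGrSet (I : Ideal (MvPolynomial (Fin n) k)) (a : Fin n → ℤ) :
    Set (MvPolynomial (Fin n) k ⧸ I) :=
  (fun g => Submodule.Quotient.mk g) '' RPieceSet k n a

end Pieces

section Taylor

variable (k n)
variable {r : ℕ} (u : Fin r → (Fin n →₀ ℕ))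

/-- The exponent of the least common multiple of the monomials `x^(u l)`, `l ∈ S`. -/
noncomputable def lcmExp (S : Finset (Fin r)) : Fin n →₀ ℕ :=
  Finsupp.equivFunOnFinite.symm (fun i => S.sup (fun l => u l i))

/-- The `s`-th term of `Hom_R(T_•, ω_R)`, where `T_•` is the Taylor complex (a
`ℤⁿ`-graded free resolution of `R/I`) on the monomial generators `x^(u l)` of `I`:
as a module it is a direct sum of copies of `R` indexed by `s`-subsets of generators. -/
abbrev TaylorDual (s : ℕ) : Type :=
  ∀ _S : {S : Finset (Fin r) // S.card = s}, MvPolynomial (Fin n) k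

/-- The differential of `Hom_R(T_•, ω_R)`: the transpose of the Taylor complex
differential. -/
noncomputable def taylorD (s : ℕ) :
    TaylorDual k n (r := r) s →ₗ[MvPolynomial (Fin n) k] TaylorDual k n (r := r) (s + 1) :=
  LinearMap.pi fun S' : {S : Finset (Fin r) // S.card = s + 1} =>
    ∑ l ∈ S'.1.attach,
      (monomial (lcmExp n u S'.1 - lcmExp n u (S'.1.erase l.1))
          ((-1 : k) ^ ((S'.1.filter (fun x => x < l.1)).card))) •
        (LinearMap.proj (⟨S'.1.erase l.1, by
            rw [Finset.card_erase_of_mem l.2, S'.2]; rfl⟩ :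
              {S : Finset (Fin r) // S.card = s}))

/-- Cocycles of `Hom_R(T_•, ω_R)` in cohomological degree `i`. -/
noncomputable def extZ (i : ℕ) :
    Submodule (MvPolynomial (Fin n) k) (TaylorDual k n (r := r) i) :=
  LinearMap.ker (taylorD k n u i)

/-- Coboundaries of `Hom_R(T_•, ω_R)` in cohomological degree `i`. -/
noncomputable def extB :
    (i : ℕ) → Submodule (MvPolynomial (Fin n) k) (TaylorDual k n (r := r) i)
  | 0 => ⊥
  | (s + 1) => LinearMap.range (taylorD k n u s)

/-- `Ext^i_R(R/I, ω_R)`: the `i`-th cohomology of `Hom_R(T_•, ω_R)`, where `T_•` is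
the Taylor resolution of `R/I` on the monomial generators `x^(u l)` of `I` and
`ω_R = R(-(1,…,1))` is the canonical module. -/
noncomputable def ExtMod (i : ℕ) : Type :=
  extZ k n u i ⧸ (Submodule.comap (extZ k n u i).subtype (extB k n u i ⊓ extZ k n u i))

noncomputable instance (i : ℕ) : AddCommGroup (ExtMod k n u i) :=
  inferInstanceAs (AddCommGroup (extZ k n u i ⧸ _))

noncomputable instance (i : ℕ) : Module (MvPolynomial (Fin n) k) (ExtMod k n u i) :=
  inferInstanceAs (Module (MvPolynomial (Fin n) k) (extZ k n u i ⧸ _))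

noncomputable instance (i : ℕ) : Module k (ExtMod k n u i) :=
  inferInstanceAs (Module k (extZ k n u i ⧸ _))

noncomputable instance (i : ℕ) :
    IsScalarTower k (MvPolynomial (Fin n) k) (ExtMod k n u i) :=
  inferInstanceAs (IsScalarTower k (MvPolynomial (Fin n) k) (extZ k n u i ⧸ _))

/-- The multidegree `a` component of `Hom_R(T_s, ω_R) = ⊕_S Hom_R(R(-lcm_S), R(-(1,…,1)))`:
the component indexed by an `s`-subset `S` must be homogeneous of multidegree
`a + lcm_S - (1,…,1)` in `R`. -/
noncomputable def taylorPiece (s : ℕ) (a : Fin n → ℤ) :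
    Submodule k (TaylorDual k n (r := r) s) :=
  Submodule.pi Set.univ
    (fun S : {S : Finset (Fin r) // S.card = s} =>
      RPiece k n (fun i => a i + (lcmExp n u S.1 i : ℤ) - 1))

/-- The multidegree `a` component of `Ext^i_R(R/I, ω_R)`, i.e. of the `i`-th
cohomology of `Hom_R(T_•, ω_R)`: the image of the multidegree `a` cocycles. -/
noncomputable def extPiece (i : ℕ) (a : Fin n → ℤ) : Submodule k (ExtMod k n u i) :=
  Submodule.map
    ((Submodule.mkQ (Submodule.comap (extZ k n u i).subtype
        (extB k n u i ⊓ extZ k n u i))).restrictScalars k)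
    (Submodule.comap ((extZ k n u i).subtype.restrictScalars k) (taylorPiece k n u i a))

end Taylor

end Paper

/-!
Let `N_t` be the `k`-span of the first `t` Stanley spaces. For `l ∉ G_j` the element `x_l m_j`
is homogeneous of degree `d_j + e_l`, so it is a `k`-combination of Stanley monomials `u m_i` of
that same degree. As `(d_i)⁺` is square-free with support `G_i ⊇ supp u`, and `l ∉ G_j`, the
degree equation `d_i + u = d_j + e_l` forces `u = 0`, hence `|d_i| = |d_j| + 1` and
`i < j` by the ordering. Thus `x_l m_j ∈ N_j`, and by induction `N_t = R m_1 + ⋯ + R m_t`.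

So `f ↦ f m_j` maps `R` onto `M⁽ʲ⁾/M⁽ʲ⁻¹⁾`, killing the ideal `(x_l : l ∉ G_j)`. Modulo this
ideal every `f` is a polynomial `g` in the variables of `G_j`; if `g m_j ∈ M⁽ʲ⁻¹⁾ = N_j` then
`g m_j = 0` because the Stanley spaces are independent, and `g = 0` because the monomial
multiples of `m_j` in `k[G_j] m_j` are nonzero and of pairwise distinct degrees.
-/

namespace DirectSum.IsInternal

variable {ι R M : Type*} [DecidableEq ι] [Semiring R] [AddCommMonoid M] [Module R M]
  {A : ι → Submodule R M}

noncomputable def proj (h : IsInternal A) (i : ι) : M →ₗ[R] M :=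
  (A i).subtype ∘ₗ component R ι (fun j => A j) i ∘ₗ
    (LinearEquiv.ofBijective (coeLinearMap A) h).symm.toLinearMap

theorem proj_of_mem (h : IsInternal A) {i : ι} {x : M} (hx : x ∈ A i) : h.proj i x = x := by
  simp [proj, ← apply_eq_component, h.ofBijective_coeLinearMap_of_mem hx]

theorem proj_of_mem_of_ne (h : IsInternal A) {i j : ι} (hij : i ≠ j) {x : M} (hx : x ∈ A i) :
    h.proj j x = 0 := by
  simp [proj, ← apply_eq_component, h.ofBijective_coeLinearMap_of_mem_ne hij hx]

theorem mem_span_inter_of_mem_span (h : IsInternal A) {s : Set M} (hs : ∀ y ∈ s, ∃ i, y ∈ A i)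
    {i : ι} {x : M} (hx : x ∈ Submodule.span R s) (hxi : x ∈ A i) :
    x ∈ Submodule.span R (s ∩ A i) := by
  rw [← h.proj_of_mem hxi]
  refine Submodule.span_le.mpr ?_ (Submodule.apply_mem_span_image_of_mem_span (h.proj i) hx)
  rintro _ ⟨y, hy, rfl⟩
  obtain ⟨j, hyj⟩ := hs y hy
  by_cases hji : j = i
  · subst hji
    rw [h.proj_of_mem hyj]
    exact Submodule.subset_span ⟨hy, hyj⟩
  · rw [h.proj_of_mem_of_ne hji hyj]
    exact zero_mem _

end DirectSum.IsInternal

theorem iSupIndep.eq_of_mem_of_mem {ι R M : Type*} [Semiring R] [AddCommMonoid M] [Module R M]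
    {A : ι → Submodule R M} (h : iSupIndep A) {i j : ι} {x : M} (hi : x ∈ A i) (hj : x ∈ A j)
    (hx : x ≠ 0) : i = j := by
  by_contra hij
  exact hx ((Submodule.disjoint_def.mp (h.pairwiseDisjoint hij)) x hi hj)

theorem Submodule.exists_quotEquiv_of_eq_sup_span_singleton {R M : Type*} [CommRing R]
    [AddCommGroup M] [Module R M] {N P : Submodule R M} {x : M} (hP : P = N ⊔ R ∙ x)
    {I : Ideal R} (hI : ∀ f : R, f • x ∈ N ↔ f ∈ I) :
    ∃ (hx : x ∈ P) (e : (P ⧸ N.comap P.subtype) ≃ₗ[R] R ⧸ I),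
      e (Submodule.Quotient.mk ⟨x, hx⟩) = Submodule.Quotient.mk 1 := by
  have hx : x ∈ P := hP ▸ Submodule.mem_sup_right (Submodule.mem_span_singleton_self x)
  let φ : R →ₗ[R] P ⧸ N.comap P.subtype :=
    (N.comap P.subtype).mkQ ∘ₗ LinearMap.toSpanSingleton R P ⟨x, hx⟩
  have hker : LinearMap.ker φ = I := by
    ext f
    simp [φ, Submodule.Quotient.mk_eq_zero, hI]
  have hsurj : Function.Surjective φ := by
    intro q
    obtain ⟨⟨y, hy⟩, rfl⟩ := Submodule.mkQ_surjective _ q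
    rw [hP] at hy
    obtain ⟨z, hz, w, hw, rfl⟩ := Submodule.mem_sup.mp hy
    obtain ⟨f, rfl⟩ := Submodule.mem_span_singleton.mp hw
    refine ⟨f, (Submodule.Quotient.eq _).mpr ?_⟩
    simpa using neg_mem hz
  refine ⟨hx, (Submodule.quotEquivOfEq _ _ hker.symm ≪≫ₗ φ.quotKerEquivOfSurjective hsurj).symm, ?_⟩
  rw [LinearEquiv.symm_apply_eq, LinearEquiv.trans_apply, Submodule.quotEquivOfEq_mk,
    LinearMap.quotKerEquivOfSurjective_apply_mk]
  simp [φ]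

namespace MvPolynomial

variable {σ R : Type*} [CommSemiring R]

theorem monomial_mem_span_X_image_compl {s : Set σ} {u : σ →₀ ℕ} (hu : ¬ ↑u.support ⊆ s)
    (r : R) : monomial u r ∈ Ideal.span (X '' sᶜ : Set (MvPolynomial σ R)) := by
  classical
  obtain ⟨i, hiu, his⟩ := Set.not_subset.mp hu
  rw [mem_ideal_span_X_image]
  intro v hv
  rw [Finset.mem_coe, Finsupp.mem_support_iff] at hiu
  exact ⟨i, his, by rwa [(Finset.mem_singleton.mp (support_monomial_subset hv))]⟩

theorem restrictSupport_sup_span_X_image_compl_eq_top (s : Set σ) :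
    restrictSupport R {u | ↑u.support ⊆ s} ⊔
      (Ideal.span (X '' sᶜ : Set (MvPolynomial σ R))).restrictScalars R = ⊤ := by
  classical
  rw [eq_top_iff, ← restrictSupport_univ, restrictSupport_eq_span, Submodule.span_le]
  rintro _ ⟨u, -, rfl⟩
  by_cases hu : ↑u.support ⊆ s
  · exact Submodule.mem_sup_left ((monomial_mem_restrictSupport R).mpr (Or.inl hu))
  · exact Submodule.mem_sup_right (monomial_mem_span_X_image_compl hu 1)

end MvPolynomial

namespace Paper

open MvPolynomial

variable {k : Type} [Field k] {n : ℕ}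

theorem eq_zero_of_add_eq_add_eZ {a b : Fin n → ℤ} {u : Fin n →₀ ℕ} {l : Fin n}
    (ha : ∀ t ∈ u.support, a t = 1) (hb : ∀ t, b t ≤ 1) (hbl : b l ≤ 0)
    (h : (a + fun t => (u t : ℤ)) = b + eZ n l) : u = 0 := by
  ext t
  rw [Finsupp.coe_zero, Pi.zero_apply]
  by_contra hut
  have ht := congrFun h t
  have := ha t (Finsupp.mem_support_iff.mpr hut)
  have := hb t
  simp only [Pi.add_apply, eZ] at ht
  split_ifs at ht with htl
  · subst htl; omega
  · omega

variable {M : Type} [AddCommGroup M] [Module (MvPolynomial (Fin n) k) M]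

variable (k n) in
theorem partialSpan_succ {p : ℕ} (m : Fin p → M) (j : Fin p) :
    partialSpan k n M m (j + 1) = partialSpan k n M m j ⊔ MvPolynomial (Fin n) k ∙ m j := by
  rw [partialSpan, partialSpan, ← Set.image_singleton, ← Submodule.span_union, ← Set.image_union]
  congr
  ext i
  change _ ↔ (i : ℕ) < j ∨ i = j
  rw [Fin.ext_iff]
  omega

variable [Module k M] {gr : (Fin n → ℤ) → Submodule k M}

theorem X_pow_smul_mem (hgr_compat : ∀ (j : Fin n) (a : Fin n → ℤ), ∀ x ∈ gr a,
      (X j : MvPolynomial (Fin n) k) • x ∈ gr (a + eZ n j))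
    (l : Fin n) (c : ℕ) {b : Fin n → ℤ} {x : M} (hx : x ∈ gr b) :
    (X l ^ c : MvPolynomial (Fin n) k) • x ∈ gr (b + c • eZ n l) := by
  induction c with
  | zero => simpa using hx
  | succ c ih =>
    rw [pow_succ', mul_smul, succ_nsmul, ← add_assoc]
    exact hgr_compat l _ _ ih

theorem monomial_smul_mem (hgr_compat : ∀ (j : Fin n) (a : Fin n → ℤ), ∀ x ∈ gr a,
      (X j : MvPolynomial (Fin n) k) • x ∈ gr (a + eZ n j))
    (u : Fin n →₀ ℕ) {b : Fin n → ℤ} {x : M} (hx : x ∈ gr b) :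
    (monomial u 1 : MvPolynomial (Fin n) k) • x ∈ gr (b + fun i => (u i : ℤ)) := by
  induction u using Finsupp.induction generalizing b x with
  | zero => simpa [Pi.add_def] using hx
  | single_add l c u _ _ ih =>
    rw [monomial_single_add, mul_smul]
    convert X_pow_smul_mem hgr_compat l c (ih hx) using 2
    ext i
    simp only [eZ, Finsupp.coe_add, Pi.add_apply, Finsupp.single_apply, Pi.smul_apply,
      Nat.cast_add]
    by_cases h : i = l
    · subst h
      simp only [if_true, nsmul_eq_mul, mul_one]
      ring
    · simp [h, Ne.symm h]

section

variable [IsScalarTower k (MvPolynomial (Fin n) k) M]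

theorem smul_mem_stanleySpan {m : M} {G : Set (Fin n)} {g : MvPolynomial (Fin n) k}
    (hg : g ∈ restrictSupport k {u | ↑u.support ⊆ G}) : g • m ∈ stanleySpan k n M m G := by
  rw [restrictSupport_eq_span] at hg
  induction hg using Submodule.span_induction with
  | mem _ hu =>
    obtain ⟨u, hu, rfl⟩ := hu
    exact Submodule.subset_span ⟨u, hu, rfl⟩
  | zero => simp
  | add f g _ _ hf hg => simpa [add_smul] using add_mem hf hg
  | smul c g _ hg => simpa [smul_assoc] using Submodule.smul_mem _ c hg

theorem IsStanleySpace.eq_zero_of_smul_eq_zero (hgr : DirectSum.IsInternal gr)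
    (hgr_compat : ∀ (j : Fin n) (a : Fin n → ℤ), ∀ x ∈ gr a,
      (X j : MvPolynomial (Fin n) k) • x ∈ gr (a + eZ n j))
    {m : M} {b : Fin n → ℤ} {G : Set (Fin n)} (hm : m ∈ gr b) (hS : IsStanleySpace k n M m G)
    {g : MvPolynomial (Fin n) k} (hg : g ∈ restrictSupport k {u | ↑u.support ⊆ G})
    (hgm : g • m = 0) : g = 0 := by
  set S : Set (Fin n →₀ ℕ) := {u | ↑u.support ⊆ G}
  have hdeg_inj : Function.Injective fun u : S => b + fun i => (u.1 i : ℤ) := by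
    intro u v huv
    ext i
    simpa using congrFun huv i
  have hli : LinearIndepOn k (fun u => (monomial u 1 : MvPolynomial (Fin n) k) • m) S :=
    iSupIndep.linearIndependent _ (hgr.submodule_iSupIndep.comp hdeg_inj)
      (fun u => monomial_smul_mem hgr_compat u.1 hm) (fun u => hS u.1 u.2)
  rw [restrictSupport_eq_span, Finsupp.mem_span_image_iff_linearCombination] at hg
  obtain ⟨l, hlS, rfl⟩ := hg
  have hl : Finsupp.linearCombination k (fun u => (monomial u 1 : MvPolynomial (Fin n) k) • m) l
      = 0 := by
    rw [← hgm]
    exact (Finsupp.apply_linearCombination k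
      ((LinearMap.toSpanSingleton (MvPolynomial (Fin n) k) M m).restrictScalars k) _ l).symm
  rw [linearIndepOn_iff.mp hli l hlS hl, map_zero]

end

variable {p : ℕ} {m : Fin p → M} {G : Fin p → Set (Fin n)}

variable (k m G) in
def stanleyPartialSum (t : ℕ) : Submodule k M :=
  ⨆ (i : Fin p) (_ : (i : ℕ) < t), stanleySpan k n M (m i) (G i)

theorem stanleySpan_le_stanleyPartialSum {i : Fin p} {t : ℕ} (hi : (i : ℕ) < t) :
    stanleySpan k n M (m i) (G i) ≤ stanleyPartialSum k m G t :=
  le_iSup₂_of_le i hi le_rfl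

theorem stanleyPartialSum_mono {s t : ℕ} (hst : s ≤ t) :
    stanleyPartialSum k m G s ≤ stanleyPartialSum k m G t :=
  biSup_mono fun _ hi => hi.trans_le hst

section

variable [IsScalarTower k (MvPolynomial (Fin n) k) M]

theorem stanleyPartialSum_le_partialSpan (t : ℕ) :
    stanleyPartialSum k m G t ≤ (partialSpan k n M m t).restrictScalars k := by
  refine iSup₂_le fun i hi => Submodule.span_le.mpr ?_
  rintro _ ⟨u, -, rfl⟩
  exact Submodule.smul_mem _ _ (Submodule.subset_span (Set.mem_image_of_mem m hi))

end

variable {d : Fin p → Fin n → ℤ}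
  (hgr_internal : DirectSum.IsInternal gr)
  (hgr_compat : ∀ (j : Fin n) (a : Fin n → ℤ), ∀ x ∈ gr a,
    (X j : MvPolynomial (Fin n) k) • x ∈ gr (a + eZ n j))
  (hSD : IsStanleyDecomposition k n M m G) (hdeg : ∀ i, m i ∈ gr (d i))
  (hsf : ∀ i l, d i l ≤ 1) (hG : ∀ i, G i = {l | 0 < d i l})
  (hord : ∀ i j : Fin p, i ≤ j → (∑ l, d j l) ≤ (∑ l, d i l))
include hgr_internal hgr_compat hSD hdeg hsf hG hord

theorem X_smul_mem_stanleyPartialSum {j : Fin p} {l : Fin n} (hl : l ∉ G j) :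
    (X l : MvPolynomial (Fin n) k) • m j ∈ stanleyPartialSum k m G j := by
  set gens : Set M :=
    ⋃ i, {x | ∃ u : Fin n →₀ ℕ, ↑u.support ⊆ G i ∧ x = (monomial u 1 : MvPolynomial _ k) • m i}
  have hspan : Submodule.span k gens = ⊤ := by
    rw [Submodule.span_iUnion]
    exact hSD.2.submodule_iSup_eq_top
  have hhom : ∀ y ∈ gens, ∃ a, y ∈ gr a := by
    rintro _ ⟨_, ⟨i, rfl⟩, u, -, rfl⟩
    exact ⟨_, monomial_smul_mem hgr_compat u (hdeg i)⟩
  have hmem := hgr_internal.mem_span_inter_of_mem_span hhom (hspan ▸ Submodule.mem_top)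
    (hgr_compat l _ _ (hdeg j))
  refine Submodule.span_le.mpr ?_ hmem
  rintro _ ⟨hy, hya⟩
  obtain ⟨i, u, hu, rfl⟩ := Set.mem_iUnion.mp hy
  have hdi : (d i + fun t => (u t : ℤ)) = d j + eZ n l :=
    hgr_internal.submodule_iSupIndep.eq_of_mem_of_mem (monomial_smul_mem hgr_compat u (hdeg i))
      hya (hSD.1 i u hu)
  have hdil : ∀ t ∈ u.support, d i t = 1 := fun t ht => by
    have := hsf i t
    have : 0 < d i t := by simpa [hG] using hu ht
    omega
  obtain rfl : u = 0 := eq_zero_of_add_eq_add_eZ hdil (hsf j) (by simpa [hG] using hl) hdi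
  have hsum : ∑ t, d i t = ∑ t, d j t + 1 := by
    simpa [Finset.sum_add_distrib, eZ] using congrArg (fun a => ∑ t, a t) hdi
  have hij : (i : ℕ) < j := by
    by_contra hji
    have := hord j i (Fin.le_def.mpr (not_lt.mp hji))
    omega
  exact stanleySpan_le_stanleyPartialSum hij (Submodule.subset_span ⟨0, hu, rfl⟩)

variable [IsScalarTower k (MvPolynomial (Fin n) k) M]

theorem smul_mem_partialSpan_of_mem {j : Fin p} {f : MvPolynomial (Fin n) k}
    (hf : f ∈ Ideal.span (X '' (G j)ᶜ)) : f • m j ∈ partialSpan k n M m j := by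
  refine (Ideal.span_le (I := (partialSpan k n M m j).comap
    (LinearMap.toSpanSingleton _ M (m j)))).mpr ?_ hf
  rintro _ ⟨l, hl, rfl⟩
  exact stanleyPartialSum_le_partialSpan j
    (X_smul_mem_stanleyPartialSum hgr_internal hgr_compat hSD hdeg hsf hG hord hl)

theorem partialSpan_le_stanleyPartialSum (t : ℕ) :
    (partialSpan k n M m t).restrictScalars k ≤ stanleyPartialSum k m G t := by
  induction t using Nat.strong_induction_on with
  | _ t ih =>
  rw [partialSpan, ← Submodule.span_smul_of_span_eq_top (basisMonomials (Fin n) k).span_eq,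
    Submodule.span_le]
  rintro _ ⟨_, ⟨u, rfl⟩, _, ⟨i, hi, rfl⟩, rfl⟩
  by_cases hu : ↑u.support ⊆ G i
  · exact stanleySpan_le_stanleyPartialSum hi (Submodule.subset_span ⟨u, hu, rfl⟩)
  · refine stanleyPartialSum_mono hi.le (ih i hi ?_)
    exact smul_mem_partialSpan_of_mem hgr_internal hgr_compat hSD hdeg hsf hG hord
      (monomial_mem_span_X_image_compl hu 1)

theorem smul_mem_partialSpan_iff (j : Fin p) (f : MvPolynomial (Fin n) k) :
    f • m j ∈ partialSpan k n M m j ↔ f ∈ Ideal.span (X '' (G j)ᶜ) := by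
  refine ⟨fun hf => ?_, smul_mem_partialSpan_of_mem hgr_internal hgr_compat hSD hdeg hsf hG hord⟩
  obtain ⟨g, hg, h, hh, rfl⟩ := Submodule.mem_sup.mp
    ((restrictSupport_sup_span_X_image_compl_eq_top (G j)).ge (Submodule.mem_top (x := f)))
  have hgm : g • m j ∈ partialSpan k n M m j := by
    simpa [add_smul] using sub_mem hf
      (smul_mem_partialSpan_of_mem hgr_internal hgr_compat hSD hdeg hsf hG hord hh)
  have hdisj : Disjoint (stanleySpan k n M (m j) (G j)) (stanleyPartialSum k m G j) :=
    (hSD.2.submodule_iSupIndep j).mono_right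
      (biSup_mono fun i hi hij => hi.ne (congrArg Fin.val hij))
  have hg0 : g • m j = 0 := Submodule.disjoint_def.mp hdisj _ (smul_mem_stanleySpan hg)
    (partialSpan_le_stanleyPartialSum hgr_internal hgr_compat hSD hdeg hsf hG hord j hgm)
  rwa [IsStanleySpace.eq_zero_of_smul_eq_zero hgr_internal hgr_compat (hdeg j) (hSD.1 j) hg hg0,
    zero_add]

end Paper

open MvPolynomial Paper in
theorem stmt_2_general {k : Type} [Field k] {n : ℕ}
    (M : Type) [AddCommGroup M] [Module (MvPolynomial (Fin n) k) M]
    [Module k M] [IsScalarTower k (MvPolynomial (Fin n) k) M]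
    -- `gr` is the `ℤⁿ`-grading of `M`
    (gr : (Fin n → ℤ) → Submodule k M)
    (hgr_internal : DirectSum.IsInternal gr)
    (hgr_compat : ∀ (j : Fin n) (a : Fin n → ℤ), ∀ x ∈ gr a,
      (X j : MvPolynomial (Fin n) k) • x ∈ gr (a + eZ n j))
    -- a Stanley decomposition `{(m i, G i)}` of `M` …
    {p : ℕ} (m : Fin p → M) (G : Fin p → Set (Fin n)) (d : Fin p → (Fin n → ℤ))
    (hSD : IsStanleyDecomposition k n M m G)
    -- … by homogeneous elements `m i` of degree `d i`,
    (hdeg : ∀ i, m i ∈ gr (d i))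
    -- with `(d i)⁺` square-free,
    (hsf : ∀ i l, d i l ≤ 1)
    -- `G i = supp ((d i)⁺)`,
    (hG : ∀ i, G i = {l | 0 < d i l})
    -- and the pairs ordered by weakly decreasing total degree:
    (hord : ∀ i j : Fin p, i ≤ j → (∑ l, d j l) ≤ (∑ l, d i l)) :
    -- Then this ordering makes `S` a Stanley filtration: with
    -- `M⁽ʲ⁾ = R m_1 + ⋯ + R m_j`, for each `j` one has
    -- `M⁽ʲ⁾/M⁽ʲ⁻¹⁾ ≅ k[G j](-d j) = (R/(x_l : l ∉ G j))(-d j)` as `R`-modules,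
    -- the free `k[G j]`-module on the class of `m j`:
    ∀ j : Fin p,
      partialSpan k n M m (j : ℕ) ≤ partialSpan k n M m ((j : ℕ) + 1) ∧
      ∃ (hm : m j ∈ partialSpan k n M m ((j : ℕ) + 1))
        (e : (partialSpan k n M m ((j : ℕ) + 1) ⧸
              Submodule.comap (partialSpan k n M m ((j : ℕ) + 1)).subtype
                (partialSpan k n M m (j : ℕ))) ≃ₗ[MvPolynomial (Fin n) k]
            (MvPolynomial (Fin n) k ⧸
              Ideal.span {f : MvPolynomial (Fin n) k | ∃ l, l ∉ G j ∧ f = X l})),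
        e (Submodule.Quotient.mk ⟨m j, hm⟩) =
          Submodule.Quotient.mk (1 : MvPolynomial (Fin n) k) := by
  intro j
  have hvars : {f : MvPolynomial (Fin n) k | ∃ l, l ∉ G j ∧ f = X l} = X '' (G j)ᶜ := by
    ext f
    simp [eq_comm]
  have hker (f : MvPolynomial (Fin n) k) : f • m j ∈ partialSpan k n M m j ↔
      f ∈ Ideal.span {f : MvPolynomial (Fin n) k | ∃ l, l ∉ G j ∧ f = X l} := by
    rw [hvars]
    exact smul_mem_partialSpan_iff hgr_internal hgr_compat hSD hdeg hsf hG hord j f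
  have hsucc := partialSpan_succ k n m j
  exact ⟨hsucc ▸ le_sup_left, Submodule.exists_quotEquiv_of_eq_sup_span_singleton hsucc hker⟩

open MvPolynomial Paper in
theorem stmt_2 {k : Type} [Field k] {n : ℕ}
    (M : Type) [AddCommGroup M] [Module (MvPolynomial (Fin n) k) M]
    [Module k M] [IsScalarTower k (MvPolynomial (Fin n) k) M]
    [Module.Finite (MvPolynomial (Fin n) k) M]
    -- `gr` is the `ℤⁿ`-grading of `M`
    (gr : (Fin n → ℤ) → Submodule k M)
    (hgr_internal : DirectSum.IsInternal gr)
    (hgr_compat : ∀ (j : Fin n) (a : Fin n → ℤ), ∀ x ∈ gr a,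
      (X j : MvPolynomial (Fin n) k) • x ∈ gr (a + eZ n j))
    -- a Stanley decomposition `{(m i, G i)}` of `M` …
    {p : ℕ} (m : Fin p → M) (G : Fin p → Set (Fin n)) (d : Fin p → (Fin n → ℤ))
    (hSD : IsStanleyDecomposition k n M m G)
    -- … by homogeneous elements `m i` of degree `d i`,
    (hdeg : ∀ i, m i ∈ gr (d i))
    -- with `(d i)⁺` square-free,
    (hsf : ∀ i l, d i l ≤ 1)
    -- `G i = supp ((d i)⁺)`,
    (hG : ∀ i, G i = {l | 0 < d i l})
    -- and the pairs ordered by weakly decreasing total degree: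
    (hord : ∀ i j : Fin p, i ≤ j → (∑ l, d j l) ≤ (∑ l, d i l)) :
    -- Then this ordering makes `S` a Stanley filtration: with
    -- `M⁽ʲ⁾ = R m_1 + ⋯ + R m_j`, for each `j` one has
    -- `M⁽ʲ⁾/M⁽ʲ⁻¹⁾ ≅ k[G j](-d j) = (R/(x_l : l ∉ G j))(-d j)` as `R`-modules,
    -- the free `k[G j]`-module on the class of `m j`:
    ∀ j : Fin p,
      partialSpan k n M m (j : ℕ) ≤ partialSpan k n M m ((j : ℕ) + 1) ∧
      ∃ (hm : m j ∈ partialSpan k n M m ((j : ℕ) + 1))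
        (e : (partialSpan k n M m ((j : ℕ) + 1) ⧸
              Submodule.comap (partialSpan k n M m ((j : ℕ) + 1)).subtype
                (partialSpan k n M m (j : ℕ))) ≃ₗ[MvPolynomial (Fin n) k]
            (MvPolynomial (Fin n) k ⧸
              Ideal.span {f : MvPolynomial (Fin n) k | ∃ l, l ∉ G j ∧ f = X l})),
        e (Submodule.Quotient.mk ⟨m j, hm⟩) =
          Submodule.Quotient.mk (1 : MvPolynomial (Fin n) k) :=
  stmt_2_general M gr hgr_internal hgr_compat m G d hSD hdeg hsf hG hord
end

section
/- Let $I \subseteq R = k[x_1,\ldots,x_n]$ be a monomial ideal, $\mathfrak{m} = (x_1,\ldots,x_n)$, and let $F \subseteq \{1,\ldots,n\}$ and $\mathbf{a} \in \mathbb{Z}^n$ satisfy $\mathrm{supp}(\mathbf{a}^-) = F$. Then for all $i$, the degree-$\mathbf{a}$ component of the local cohomology satisfies $H^i_{\mathfrak{m}}(R/I)_{\mathbf{a}} = H^i(\check{C}_F^\bullet \otimes_R (R/I))_{\mathbf{a}}$, where $\check{C}_F^\bullet$ is the restricted Čech subcomplex supported on subsets containing $F$. -/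
/-!
Common definitions: `ℤⁿ`-graded modules over `R = k[x_1, …, x_n]`, Stanley
decompositions, the Čech complex on `x_1, …, x_n` (computing local cohomology
`H^i_𝔪` and, via the standard characterization, Castelnuovo–Mumford regularity),
and `Ext^i_R(R/I, ω_R)` for a monomial ideal `I`, computed with its natural
`ℤⁿ`-grading from the Taylor complex, which is a graded free resolution of `R/I`
on a chosen set of monomial generators of `I`.
-/

open MvPolynomial

/-!
A summand `(R/I)_{x_Λ}` of the Čech complex has nothing in multidegree `a` unless `Λ` contains
every `l` with `a l < 0`: `R/I` lives in nonnegative multidegrees and only the variables in `Λ`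
are inverted. So every multidegree `a` cochain already lies in `Č_F`, which gives surjectivity.
For injectivity, if a multidegree `a` cocycle of `Č_F` is `d c`, project `c` to multidegree `a`:
since `I` is monomial, taking homogeneous components is well defined on `R/I`, extends to its
localizations and commutes with `d`, so the projection is a primitive lying in `Č_F`.
-/

namespace MvPolynomial

variable {σ R M : Type*} [CommSemiring R]

theorem weightedHomogeneousComponent_monomial_mul [AddCommGroup M] (w : σ → M) (p : σ →₀ ℕ)
    (c : R) (b : M) (f : MvPolynomial σ R) :
    weightedHomogeneousComponent w (Finsupp.weight w p + b) (monomial p c * f) =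
      monomial p c * weightedHomogeneousComponent w b f := by
  classical
  ext t
  simp only [coeff_weightedHomogeneousComponent, coeff_monomial_mul']
  by_cases hpt : p ≤ t
  · obtain ⟨q, rfl⟩ := le_iff_exists_add.mp hpt
    simp only [hpt, if_true, add_tsub_cancel_left, map_add, add_right_inj]
    split_ifs <;> simp
  · simp [hpt]

theorem weightedHomogeneousComponent_mem_span_monomial [AddCommMonoid M] (w : σ → M) (b : M)
    {T : Set (σ →₀ ℕ)} {f : MvPolynomial σ R}
    (hf : f ∈ Ideal.span ((fun s => monomial s (1 : R)) '' T)) :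
    weightedHomogeneousComponent w b f ∈ Ideal.span ((fun s => monomial s (1 : R)) '' T) := by
  classical
  rw [mem_ideal_span_monomial_image] at hf ⊢
  intro t ht
  rw [support_weightedHomogeneousComponent, Finset.mem_filter] at ht
  exact hf t ht.1

end MvPolynomial

namespace Paper

variable {k : Type} [Field k] {n : ℕ}

lemma weight_eZ (s : Fin n →₀ ℕ) : Finsupp.weight (eZ n) s = fun i => (s i : ℤ) := by
  funext i
  simp [Finsupp.weight_eq_sum, eZ, Finset.sum_apply]

lemma weight_eZ_eq_iff {s : Fin n →₀ ℕ} {b : Fin n → ℤ} :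
    Finsupp.weight (eZ n) s = b ↔ ∀ i, (s i : ℤ) = b i := by
  rw [weight_eZ, funext_iff]

lemma weightedHomogeneousComponent_eZ_of_forall {b : Fin n → ℤ} {s : Fin n →₀ ℕ}
    (hs : ∀ i, (s i : ℤ) = b i) (f : MvPolynomial (Fin n) k) :
    weightedHomogeneousComponent (eZ n) b f = monomial s (coeff s f) := by
  classical
  ext t
  have hts : Finsupp.weight (eZ n) t = b ↔ t = s := by
    rw [weight_eZ_eq_iff, Finsupp.ext_iff]
    exact forall_congr' fun i => by rw [← hs i]; omega
  rw [coeff_weightedHomogeneousComponent, coeff_monomial]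
  simp only [hts, eq_comm (a := s)]
  split_ifs with h <;> simp only [h]

lemma weightedHomogeneousComponent_eZ_eq_zero {b : Fin n → ℤ}
    (hb : ¬ ∃ s : Fin n →₀ ℕ, ∀ i, (s i : ℤ) = b i) (f : MvPolynomial (Fin n) k) :
    weightedHomogeneousComponent (eZ n) b f = 0 := by
  classical
  ext t
  rw [coeff_weightedHomogeneousComponent, if_neg (mt weight_eZ_eq_iff.mp fun h => hb ⟨t, h⟩),
    coeff_zero]

section Quotient

variable {I : Ideal (MvPolynomial (Fin n) k)}

noncomputable def quotientHomogeneousComponent (hI : IsMonomialIdeal k n I) (b : Fin n → ℤ) :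
    (MvPolynomial (Fin n) k ⧸ I) →ₗ[k] (MvPolynomial (Fin n) k ⧸ I) :=
  Submodule.mapQ (I.restrictScalars k) (I.restrictScalars k)
    (weightedHomogeneousComponent (eZ n) b) fun _ hf => by
      obtain ⟨T, rfl⟩ := hI
      exact weightedHomogeneousComponent_mem_span_monomial _ _ hf

lemma quotientHomogeneousComponent_mk (hI : IsMonomialIdeal k n I) (b : Fin n → ℤ)
    (f : MvPolynomial (Fin n) k) :
    quotientHomogeneousComponent hI b (Submodule.Quotient.mk f) =
      Submodule.Quotient.mk (weightedHomogeneousComponent (eZ n) b f) :=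
  rfl

lemma quotientHomogeneousComponent_monomial_smul (hI : IsMonomialIdeal k n I)
    (p : Fin n →₀ ℕ) (b : Fin n → ℤ) (m : MvPolynomial (Fin n) k ⧸ I) :
    quotientHomogeneousComponent hI (Finsupp.weight (eZ n) p + b)
        ((monomial p (1 : k) : MvPolynomial (Fin n) k) • m) =
      (monomial p (1 : k) : MvPolynomial (Fin n) k) • quotientHomogeneousComponent hI b m := by
  obtain ⟨f, rfl⟩ := Submodule.Quotient.mk_surjective _ m
  rw [← Submodule.Quotient.mk_smul, quotientHomogeneousComponent_mk,
    quotientHomogeneousComponent_mk, ← Submodule.Quotient.mk_smul, smul_eq_mul, smul_eq_mul,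
    weightedHomogeneousComponent_monomial_mul]

lemma nonneg_of_mem_quotientGrSet {b : Fin n → ℤ} {m : MvPolynomial (Fin n) k ⧸ I}
    (hm : m ∈ quotientGrSet k n I b) (i : Fin n) : 0 ≤ b i := by
  obtain ⟨_, ⟨c, s, hs, rfl⟩, rfl⟩ := hm
  rw [← hs i]
  exact Int.natCast_nonneg _

lemma quotientHomogeneousComponent_of_mem (hI : IsMonomialIdeal k n I) {b : Fin n → ℤ}
    {m : MvPolynomial (Fin n) k ⧸ I} (hm : m ∈ quotientGrSet k n I b) :
    quotientHomogeneousComponent hI b m = m := by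
  obtain ⟨_, ⟨c, s, hs, rfl⟩, rfl⟩ := hm
  rw [quotientHomogeneousComponent_mk, weightedHomogeneousComponent_eZ_of_forall hs,
    coeff_monomial, if_pos rfl]

lemma quotientHomogeneousComponent_eq_zero_or_mem (hI : IsMonomialIdeal k n I) (b : Fin n → ℤ)
    (m : MvPolynomial (Fin n) k ⧸ I) :
    quotientHomogeneousComponent hI b m = 0 ∨
      quotientHomogeneousComponent hI b m ∈ quotientGrSet k n I b := by
  obtain ⟨f, rfl⟩ := Submodule.Quotient.mk_surjective _ m
  rw [quotientHomogeneousComponent_mk]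
  by_cases hb : ∃ s : Fin n →₀ ℕ, ∀ i, (s i : ℤ) = b i
  · obtain ⟨s, hs⟩ := hb
    rw [weightedHomogeneousComponent_eZ_of_forall hs]
    exact Or.inr ⟨_, ⟨_, s, hs, rfl⟩, rfl⟩
  · rw [weightedHomogeneousComponent_eZ_eq_zero hb, Submodule.Quotient.mk_zero]
    exact Or.inl rfl

end Quotient

section Localization

variable {Λ : Finset (Fin n)}

lemma exists_monomial_of_mem_varSubmonoid {g : MvPolynomial (Fin n) k}
    (hg : g ∈ varSubmonoid k n Λ) :
    ∃ s : Fin n →₀ ℕ, ↑s.support ⊆ (Λ : Set (Fin n)) ∧ g = monomial s 1 := by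
  classical
  induction hg using Submonoid.closure_induction with
  | mem x hx =>
    obtain ⟨i, hi, rfl⟩ := hx
    refine ⟨Finsupp.single i 1, ?_, rfl⟩
    simpa [Finsupp.support_single] using hi
  | one => exact ⟨0, by simp, by simp [monomial_zero']⟩
  | mul x y _ _ hx hy =>
    obtain ⟨s, hs, rfl⟩ := hx
    obtain ⟨t, ht, rfl⟩ := hy
    refine ⟨s + t, ?_, by rw [monomial_mul, one_mul]⟩
    exact (Finset.coe_subset.mpr Finsupp.support_add).trans
      (by simpa using Set.union_subset hs ht)

noncomputable def denomExp (d : varSubmonoid k n Λ) : Fin n →₀ ℕ :=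
  (exists_monomial_of_mem_varSubmonoid d.2).choose

lemma support_denomExp_subset (d : varSubmonoid k n Λ) :
    ↑(denomExp d).support ⊆ (Λ : Set (Fin n)) :=
  (exists_monomial_of_mem_varSubmonoid d.2).choose_spec.1

lemma coe_eq_monomial_denomExp (d : varSubmonoid k n Λ) :
    (d : MvPolynomial (Fin n) k) = monomial (denomExp d) 1 :=
  (exists_monomial_of_mem_varSubmonoid d.2).choose_spec.2

lemma denomExp_eq {d : varSubmonoid k n Λ} {s : Fin n →₀ ℕ}
    (h : (d : MvPolynomial (Fin n) k) = monomial s 1) : denomExp d = s :=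
  monomial_left_injective one_ne_zero ((coe_eq_monomial_denomExp d).symm.trans h)

lemma denomExp_mul (d d' : varSubmonoid k n Λ) : denomExp (d * d') = denomExp d + denomExp d' := by
  apply denomExp_eq
  rw [Submonoid.coe_mul, coe_eq_monomial_denomExp, coe_eq_monomial_denomExp, monomial_mul,
    one_mul]

lemma support_subset_of_monomial_mem_varSubmonoid {s : Fin n →₀ ℕ}
    (hs : (monomial s (1 : k) : MvPolynomial (Fin n) k) ∈ varSubmonoid k n Λ) :
    ↑s.support ⊆ (Λ : Set (Fin n)) :=
  denomExp_eq (d := ⟨_, hs⟩) rfl ▸ support_denomExp_subset _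

variable (k n) (M : Type) [AddCommGroup M] [Module (MvPolynomial (Fin n) k) M]

/-- `π b` stands for the projection of `M` onto its multidegree `b` component. -/
def MonomialEquivariant (π : (Fin n → ℤ) → M →+ M) : Prop :=
  ∀ (p : Fin n →₀ ℕ) (b : Fin n → ℤ) (m : M),
    π (Finsupp.weight (eZ n) p + b) ((monomial p (1 : k) : MvPolynomial (Fin n) k) • m) =
      (monomial p (1 : k) : MvPolynomial (Fin n) k) • π b m

variable {k n M} {π : (Fin n → ℤ) → M →+ M}

lemma MonomialEquivariant.denom_smul (hπ : MonomialEquivariant k n M π)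
    (d : varSubmonoid k n Λ) (b : Fin n → ℤ) (m : M) :
    π (Finsupp.weight (eZ n) (denomExp d) + b) (d • m) = d • π b m := by
  rw [Submonoid.smul_def, Submonoid.smul_def, coe_eq_monomial_denomExp]
  exact hπ _ _ _

lemma MonomialEquivariant.wellDefined (hπ : MonomialEquivariant k n M π) (a : Fin n → ℤ)
    {p p' : M × varSubmonoid k n Λ} (h : p ≈ p') :
    LocalizedModule.mk (π (a + Finsupp.weight (eZ n) (denomExp p.2)) p.1) p.2 =
      LocalizedModule.mk (π (a + Finsupp.weight (eZ n) (denomExp p'.2)) p'.1) p'.2 := by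
  obtain ⟨m, d⟩ := p
  obtain ⟨m', d'⟩ := p'
  obtain ⟨u, hu⟩ := h
  rw [LocalizedModule.mk_eq]
  refine ⟨u, ?_⟩
  simp only at hu ⊢
  rw [← hπ.denom_smul d', ← hπ.denom_smul u, ← hπ.denom_smul d, ← hπ.denom_smul u, hu]
  congr 2
  abel

/-- The multidegree `a` projection of `M_{x_Λ}`: `m / xˢ ↦ π (a + s) m / xˢ`. -/
noncomputable def locProj (hπ : MonomialEquivariant k n M π) (a : Fin n → ℤ)
    (Λ : Finset (Fin n)) : LocM k n M Λ →+ LocM k n M Λ where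
  toFun x := x.liftOn
    (fun p => LocalizedModule.mk (π (a + Finsupp.weight (eZ n) (denomExp p.2)) p.1) p.2)
    fun _ _ => hπ.wellDefined a
  map_zero' := by
    rw [← LocalizedModule.zero_mk 1, LocalizedModule.liftOn_mk, map_zero,
      LocalizedModule.zero_mk]
  map_add' x y := by
    induction x, y using LocalizedModule.induction_on₂ with
    | h m m' d d' =>
      simp only [LocalizedModule.mk_add_mk, LocalizedModule.liftOn_mk, map_add]
      rw [← hπ.denom_smul d', ← hπ.denom_smul d, denomExp_mul]
      congr 4 <;> rw [map_add] <;> abel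

lemma locProj_mk (hπ : MonomialEquivariant k n M π) (a : Fin n → ℤ) (m : M)
    (d : varSubmonoid k n Λ) :
    locProj hπ a Λ (LocalizedModule.mk m d) =
      LocalizedModule.mk (π (a + Finsupp.weight (eZ n) (denomExp d)) m) d :=
  rfl

lemma locMap_mk {Λ' : Finset (Fin n)} (h : Λ ⊆ Λ') (m : M) (d : varSubmonoid k n Λ) :
    locMap k n M h (LocalizedModule.mk m d) =
      LocalizedModule.mk m ⟨d.1, varSubmonoid_mono k n h d.2⟩ := by
  rw [locMap, LocalizedModule.lift_mk, Module.End.algebraMap_isUnit_inv_apply_eq_iff,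
    LocalizedModule.mkLinearMap_apply, LocalizedModule.smul'_mk, LocalizedModule.mk_eq]
  exact ⟨1, by simp [Submonoid.smul_def]⟩

lemma locProj_locMap (hπ : MonomialEquivariant k n M π) (a : Fin n → ℤ)
    {Λ' : Finset (Fin n)} (h : Λ ⊆ Λ') (x : LocM k n M Λ) :
    locProj hπ a Λ' (locMap k n M h x) = locMap k n M h (locProj hπ a Λ x) := by
  induction x using LocalizedModule.induction_on with
  | h m d =>
    rw [locMap_mk, locProj_mk, locProj_mk, locMap_mk,
      denomExp_eq (Λ := Λ') (coe_eq_monomial_denomExp d)]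

variable {gr : (Fin n → ℤ) → Set M}

lemma locPiece_eq_bot (hgr : ∀ b, ∀ m ∈ gr b, ∀ i, 0 ≤ b i) {a : Fin n → ℤ} {l : Fin n}
    (hl : a l < 0) (hlΛ : l ∉ Λ) : locPiece k n M gr Λ a = ⊥ := by
  rw [locPiece, AddSubgroup.closure_eq_bot_iff]
  rintro _ ⟨m, b, s, hs, hm, hdeg, rfl⟩
  have hsl : s l = 0 := Finsupp.notMem_support_iff.mp fun hl' =>
    hlΛ (support_subset_of_monomial_mem_varSubmonoid hs hl')
  have hbl := hgr b m hm l
  have hdegl := hdeg l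
  omega

lemma locProj_eq_self (hπ : MonomialEquivariant k n M π) (hfix : ∀ b, ∀ m ∈ gr b, π b m = m)
    {a : Fin n → ℤ} {y : LocM k n M Λ} (hy : y ∈ locPiece k n M gr Λ a) :
    locProj hπ a Λ y = y := by
  suffices locPiece k n M gr Λ a ≤ AddMonoidHom.eqLocus (locProj hπ a Λ) (AddMonoidHom.id _)
    from this hy
  refine (AddSubgroup.closure_le _).mpr ?_
  rintro _ ⟨m, b, s, hs, hm, hdeg, rfl⟩
  have hb : a + Finsupp.weight (eZ n) s = b := by
    funext i
    rw [Pi.add_apply, weight_eZ, ← hdeg i]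
    ring
  show locProj hπ a Λ _ = _
  rw [locProj_mk, denomExp_eq rfl, hb, hfix b m hm, AddMonoidHom.id_apply]

lemma locProj_mem_locPiece (hπ : MonomialEquivariant k n M π)
    (hmem : ∀ b m, π b m = 0 ∨ π b m ∈ gr b) (a : Fin n → ℤ) (x : LocM k n M Λ) :
    locProj hπ a Λ x ∈ locPiece k n M gr Λ a := by
  induction x using LocalizedModule.induction_on with
  | h m d =>
    rw [locProj_mk]
    rcases hmem (a + Finsupp.weight (eZ n) (denomExp d)) m with h0 | hm
    · rw [h0, LocalizedModule.zero_mk]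
      exact zero_mem _
    · refine AddSubgroup.subset_closure ⟨_, _, denomExp d, coe_eq_monomial_denomExp d ▸ d.2, hm,
        fun i => by simp [weight_eZ], ?_⟩
      congr 1
      exact Subtype.ext (coe_eq_monomial_denomExp d)

end Localization

section Cech

variable {M : Type} [AddCommGroup M] [Module (MvPolynomial (Fin n) k) M]

lemma cechD_apply (j : ℕ) (c : CechTerm k n M j) (Λ' : {S : Finset (Fin n) // S.card = j + 1}) :
    cechD k n M j c Λ' = ∑ l ∈ Λ'.1.attach,
      ((-1 : ℤ) ^ ((Λ'.1.filter (fun x => x < l.1)).card)) •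
        locMap k n M (Finset.erase_subset l.1 Λ'.1)
          (c ⟨Λ'.1.erase l.1, by rw [Finset.card_erase_of_mem l.2, Λ'.2]; rfl⟩) := by
  simp only [cechD, LinearMap.pi_apply, LinearMap.coe_sum, Finset.sum_apply]
  rfl

lemma cechD_mem_cechSub {F : Finset (Fin n)} {j : ℕ} {c : CechTerm k n M j}
    (hc : c ∈ cechSub k n M F j) : cechD k n M j c ∈ cechSub k n M F (j + 1) := by
  intro Λ' hΛ'
  rw [cechD_apply]
  refine Finset.sum_eq_zero fun l _ => ?_
  rw [hc _ fun hF => hΛ' (hF.trans (Finset.erase_subset _ _)), map_zero, zsmul_zero]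

variable {gr : (Fin n → ℤ) → Set M}

lemma cechPiece_subset_cechSub (hgr : ∀ b, ∀ m ∈ gr b, ∀ i, 0 ≤ b i) {F : Finset (Fin n)}
    {a : Fin n → ℤ} (hF : ∀ l ∈ F, a l < 0) (j : ℕ) :
    cechPiece k n M gr j a ⊆ cechSub k n M F j := by
  intro c hc Λ hΛ
  obtain ⟨l, hlF, hlΛ⟩ := Finset.not_subset.mp hΛ
  have := hc Λ
  rwa [locPiece_eq_bot hgr (hF l hlF) hlΛ, AddSubgroup.mem_bot] at this

variable {π : (Fin n → ℤ) → M →+ M}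

noncomputable def cechProj (hπ : MonomialEquivariant k n M π) (a : Fin n → ℤ) (j : ℕ)
    (c : CechTerm k n M j) : CechTerm k n M j :=
  fun Λ => locProj hπ a Λ.1 (c Λ)

lemma cechD_cechProj (hπ : MonomialEquivariant k n M π) (a : Fin n → ℤ) (j : ℕ)
    (c : CechTerm k n M j) :
    cechD k n M j (cechProj hπ a j c) = cechProj hπ a (j + 1) (cechD k n M j c) := by
  funext Λ'
  simp only [cechProj, cechD_apply, map_sum, map_zsmul, locProj_locMap]

lemma mem_cechBF_of_mem_cechB (hgr : ∀ b, ∀ m ∈ gr b, ∀ i, 0 ≤ b i)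
    (hπ : MonomialEquivariant k n M π) (hfix : ∀ b, ∀ m ∈ gr b, π b m = m)
    (hmem : ∀ b m, π b m = 0 ∨ π b m ∈ gr b) {F : Finset (Fin n)} {a : Fin n → ℤ}
    (hF : ∀ l ∈ F, a l < 0) {i : ℕ} {w : CechTerm k n M i} (hw : w ∈ cechPiece k n M gr i a)
    (hB : w ∈ cechB k n M i) : w ∈ cechBF k n M F i := by
  cases i with
  | zero => exact hB
  | succ j =>
    obtain ⟨c, rfl⟩ := hB
    refine ⟨cechProj hπ a j c, cechPiece_subset_cechSub hgr hF j
      fun Λ => locProj_mem_locPiece hπ hmem a (c Λ), ?_⟩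
    rw [cechD_cechProj]
    exact funext fun Λ => locProj_eq_self hπ hfix (hw Λ)

end Cech

end Paper

set_option synthInstance.maxHeartbeats 1000000 in
set_option maxHeartbeats 1000000 in
open MvPolynomial Paper in
theorem stmt_4 {k : Type} [Field k] {n : ℕ}
    (I : Ideal (MvPolynomial (Fin n) k)) (hI : IsMonomialIdeal k n I)
    (F : Finset (Fin n)) (a : Fin n → ℤ)
    -- `supp (a⁻) = F`:
    (hFa : ∀ l, a l < 0 ↔ l ∈ F) :
    -- Then `H^i_𝔪(R/I)_a = H^i(Č_F ⊗ R/I)_a` for all `i`; that is: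
    -- `Č_F ⊗ R/I` is a subcomplex of the Čech complex `Č ⊗ R/I` (which computes
    -- `H^i_𝔪(R/I)`), …
    (∀ (i : ℕ) (c : CechTerm k n (MvPolynomial (Fin n) k ⧸ I) i),
        c ∈ cechSub k n (MvPolynomial (Fin n) k ⧸ I) F i →
          cechD k n (MvPolynomial (Fin n) k ⧸ I) i c ∈
            cechSub k n (MvPolynomial (Fin n) k ⧸ I) F (i + 1)) ∧
      -- … and the inclusion induces, in multidegree `a`, a surjection on the `i`-th
      -- cohomology (every degree `a` cocycle is cohomologous to one in `Č_F ⊗ R/I`) …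
      (∀ (i : ℕ) (z : CechTerm k n (MvPolynomial (Fin n) k ⧸ I) i),
        z ∈ LinearMap.ker (cechD k n (MvPolynomial (Fin n) k ⧸ I) i) →
          z ∈ cechPiece k n (MvPolynomial (Fin n) k ⧸ I) (quotientGrSet k n I) i a →
            ∃ w : CechTerm k n (MvPolynomial (Fin n) k ⧸ I) i,
              w ∈ cechSub k n (MvPolynomial (Fin n) k ⧸ I) F i ∧
              w ∈ LinearMap.ker (cechD k n (MvPolynomial (Fin n) k ⧸ I) i) ∧
              w ∈ cechPiece k n (MvPolynomial (Fin n) k ⧸ I) (quotientGrSet k n I) i a ∧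
              z - w ∈ cechB k n (MvPolynomial (Fin n) k ⧸ I) i) ∧
      -- … and an injection (a degree `a` cocycle of `Č_F ⊗ R/I` that is a coboundary
      -- in `Č ⊗ R/I` is already a coboundary in `Č_F ⊗ R/I`):
      (∀ (i : ℕ) (w : CechTerm k n (MvPolynomial (Fin n) k ⧸ I) i),
        w ∈ cechSub k n (MvPolynomial (Fin n) k ⧸ I) F i →
          w ∈ LinearMap.ker (cechD k n (MvPolynomial (Fin n) k ⧸ I) i) →
            w ∈ cechPiece k n (MvPolynomial (Fin n) k ⧸ I) (quotientGrSet k n I) i a →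
              w ∈ cechB k n (MvPolynomial (Fin n) k ⧸ I) i →
                w ∈ cechBF k n (MvPolynomial (Fin n) k ⧸ I) F i) := by
  have hgr : ∀ b, ∀ m ∈ quotientGrSet k n I b, ∀ i, 0 ≤ b i :=
    fun _ _ => nonneg_of_mem_quotientGrSet
  have hF : ∀ l ∈ F, a l < 0 := fun l => (hFa l).mpr
  have hπ : MonomialEquivariant k n (MvPolynomial (Fin n) k ⧸ I)
      fun b => (quotientHomogeneousComponent hI b).toAddMonoidHom :=
    quotientHomogeneousComponent_monomial_smul hI
  refine ⟨fun _ _ => cechD_mem_cechSub, fun i z hz hza => ?_, fun i w _ _ hwa hwB => ?_⟩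
  · exact ⟨z, cechPiece_subset_cechSub hgr hF i hza, hz, hza, by rw [sub_self]; exact zero_mem _⟩
  · exact mem_cechBF_of_mem_cechB hgr hπ (fun _ _ => quotientHomogeneousComponent_of_mem hI)
      (quotientHomogeneousComponent_eq_zero_or_mem hI) hF hwa hwB
end

section
/- Let $I \subseteq R = k[x_1,\ldots,x_n]$ be a monomial ideal and $\omega_R = R(-\mathbf{e}_{[n]})$ (the canonical module with its $\mathbb{Z}^n$-grading). Let $\mathbf{a} \in \mathbb{Z}^n$ and let $j \in \mathrm{supp}(\mathbf{a}^+)$ (i.e., $a_j > 0$). Then for every $i$, the multiplication map $x_j : \mathrm{Ext}^i_R(R/I,\omega_R)_{\mathbf{a}} \to \mathrm{Ext}^i_R(R/I,\omega_R)_{\mathbf{a} + \mathbf{e}_j}$ between $\mathbb{Z}^n$-graded components is bijective. -/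
/-!
Common definitions: `ℤⁿ`-graded modules over `R = k[x_1, …, x_n]`, Stanley
decompositions, the Čech complex on `x_1, …, x_n` (computing local cohomology
`H^i_𝔪` and, via the standard characterization, Castelnuovo–Mumford regularity),
and `Ext^i_R(R/I, ω_R)` for a monomial ideal `I`, computed with its natural
`ℤⁿ`-grading from the Taylor complex, which is a graded free resolution of `R/I`
on a chosen set of monomial generators of `I`.
-/

open MvPolynomial

/-!
In multidegree `a`, the `S`-component of `Hom_R(T_s, ω_R)` is `k · x^(a + lcm_S - 𝟙)` (or `0`
when this exponent has a negative entry). Since `a_j ≥ 1`, the `j`-th entry of the exponent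
stays nonnegative after subtracting `e_j`, so multiplication by `x_j` maps the degree `a` part of
every term of the complex bijectively onto its degree `a + e_j` part. These maps commute with the
differential and `x_j` is a nonzerodivisor, so they induce a bijection on cohomology: for
injectivity, if `x_j ζ = d w`, replace `w` by its degree `a + e_j` component and divide it
by `x_j`.
-/

namespace Paper

open MvPolynomial

variable {k : Type} [Field k] {n : ℕ}

section HomogeneousComponents

noncomputable def toExp (c : Fin n → ℤ) : Fin n →₀ ℕ :=
  Finsupp.equivFunOnFinite.symm fun i => (c i).toNat

@[simp]
lemma toExp_apply (c : Fin n → ℤ) (i : Fin n) : toExp c i = (c i).toNat := rfl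

lemma eZ_nonneg (j i : Fin n) : 0 ≤ eZ n j i := by
  unfold eZ; split <;> norm_num

lemma toExp_add_eZ {c : Fin n → ℤ} {j : Fin n} (hj : 0 ≤ c j) :
    toExp (c + eZ n j) = toExp c + Finsupp.single j 1 := by
  ext i
  by_cases hij : i = j
  · subst hij; simp [eZ]; omega
  · simp [eZ, hij]

lemma nonneg_add_eZ_iff {c : Fin n → ℤ} {j : Fin n} (hj : 0 ≤ c j) :
    (∀ i, 0 ≤ (c + eZ n j) i) ↔ ∀ i, 0 ≤ c i := by
  refine ⟨fun h i => ?_, fun h i => add_nonneg (h i) (eZ_nonneg j i)⟩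
  by_cases hij : i = j
  · exact hij ▸ hj
  · simpa [eZ, hij] using h i

lemma RPiece_eq_range {c : Fin n → ℤ} (hc : ∀ i, 0 ≤ c i) :
    RPiece k n c = LinearMap.range (monomial (toExp c)) := by
  refine le_antisymm (Submodule.span_le.2 ?_) ?_
  · rintro _ ⟨t, s, hs, rfl⟩
    have : s = toExp c := Finsupp.ext fun i => by have := hs i; simp; omega
    exact ⟨t, by rw [this]⟩
  · rintro _ ⟨t, rfl⟩
    exact Submodule.subset_span ⟨t, toExp c, fun i => by simp [hc i], rfl⟩

lemma RPiece_eq_bot {c : Fin n → ℤ} (hc : ¬ ∀ i, 0 ≤ c i) : RPiece k n c = ⊥ := by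
  refine Submodule.span_eq_bot.2 ?_
  rintro _ ⟨t, s, hs, rfl⟩
  exact absurd (fun i => hs i ▸ Int.natCast_nonneg (s i)) hc

lemma X_mul_mem_RPiece {c : Fin n → ℤ} (j : Fin n) {g : MvPolynomial (Fin n) k}
    (hg : g ∈ RPiece k n c) : X j * g ∈ RPiece k n (c + eZ n j) := by
  by_cases hc : ∀ i, 0 ≤ c i
  · obtain ⟨t, rfl⟩ := (RPiece_eq_range hc).le hg
    rw [RPiece_eq_range ((nonneg_add_eZ_iff (hc j)).2 hc), toExp_add_eZ (hc j)]
    exact ⟨t, by rw [X, monomial_mul, one_mul, add_comm]⟩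
  · rw [RPiece_eq_bot hc, Submodule.mem_bot] at hg
    simp [hg]

lemma exists_X_mul_eq_of_mem_RPiece {c : Fin n → ℤ} {j : Fin n} (hj : 0 ≤ c j)
    {g : MvPolynomial (Fin n) k} (hg : g ∈ RPiece k n (c + eZ n j)) :
    ∃ h ∈ RPiece k n c, X j * h = g := by
  by_cases hc : ∀ i, 0 ≤ c i
  · obtain ⟨t, rfl⟩ := (RPiece_eq_range ((nonneg_add_eZ_iff hj).2 hc)).le hg
    refine ⟨monomial (toExp c) t, (RPiece_eq_range hc).ge ⟨t, rfl⟩, ?_⟩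
    rw [X, monomial_mul, one_mul, toExp_add_eZ hj, add_comm]
  · rw [RPiece_eq_bot (mt (nonneg_add_eZ_iff hj).1 hc), Submodule.mem_bot] at hg
    exact ⟨0, Submodule.zero_mem _, by rw [hg, mul_zero]⟩

open Classical in
noncomputable def homogProj (c : Fin n → ℤ) :
    MvPolynomial (Fin n) k →ₗ[k] MvPolynomial (Fin n) k :=
  if ∀ i, 0 ≤ c i then (monomial (toExp c)).comp (lcoeff k (toExp c)) else 0

lemma homogProj_of_nonneg {c : Fin n → ℤ} (hc : ∀ i, 0 ≤ c i) (p : MvPolynomial (Fin n) k) :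
    homogProj c p = monomial (toExp c) (coeff (toExp c) p) := by
  rw [homogProj, if_pos hc]; rfl

lemma homogProj_of_not_nonneg {c : Fin n → ℤ} (hc : ¬ ∀ i, 0 ≤ c i)
    (p : MvPolynomial (Fin n) k) : homogProj c p = 0 := by
  rw [homogProj, if_neg hc]; rfl

lemma homogProj_mem (c : Fin n → ℤ) (p : MvPolynomial (Fin n) k) :
    homogProj c p ∈ RPiece k n c := by
  by_cases hc : ∀ i, 0 ≤ c i
  · rw [homogProj_of_nonneg hc, RPiece_eq_range hc]; exact ⟨_, rfl⟩
  · rw [homogProj_of_not_nonneg hc]; exact Submodule.zero_mem _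

lemma homogProj_eq_self {c : Fin n → ℤ} {p : MvPolynomial (Fin n) k}
    (hp : p ∈ RPiece k n c) : homogProj c p = p := by
  by_cases hc : ∀ i, 0 ≤ c i
  · obtain ⟨t, rfl⟩ := (RPiece_eq_range hc).le hp
    rw [homogProj_of_nonneg hc, coeff_monomial, if_pos rfl]
  · rw [RPiece_eq_bot hc, Submodule.mem_bot] at hp
    rw [hp, map_zero]

lemma homogProj_monomial_mul {c c' : Fin n → ℤ} (t : Fin n →₀ ℕ) (d : k)
    (p : MvPolynomial (Fin n) k) (h : ∀ i, c' i = c i - t i) :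
    homogProj c (monomial t d * p) = monomial t d * homogProj c' p := by
  by_cases hc' : ∀ i, 0 ≤ c' i
  · have hc : ∀ i, 0 ≤ c i := fun i => by have := h i; have := hc' i; omega
    have hts : t ≤ toExp c := fun i => by have := h i; have := hc' i; simp; omega
    have hsub : toExp c - t = toExp c' := Finsupp.ext fun i => by
      have := h i; have := hc' i; simp; omega
    rw [homogProj_of_nonneg hc, homogProj_of_nonneg hc', coeff_monomial_mul', if_pos hts,
      hsub, monomial_mul, ← hsub, add_tsub_cancel_of_le hts]
  · rw [homogProj_of_not_nonneg hc', mul_zero]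
    by_cases hc : ∀ i, 0 ≤ c i
    · have hts : ¬ t ≤ toExp c := fun hle => hc' fun i => by
        have := h i; have := hc i; have := hle i; simp at this; omega
      rw [homogProj_of_nonneg hc, coeff_monomial_mul', if_neg hts, monomial_zero]
    · exact homogProj_of_not_nonneg hc _

end HomogeneousComponents

section TaylorDual

variable {r : ℕ} (u : Fin r → (Fin n →₀ ℕ))

lemma taylorD_apply (s : ℕ) (w : TaylorDual k n (r := r) s)
    (S' : {S : Finset (Fin r) // S.card = s + 1}) :
    taylorD k n u s w S' =
      ∑ l ∈ S'.1.attach,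
        monomial (lcmExp n u S'.1 - lcmExp n u (S'.1.erase l.1))
            ((-1 : k) ^ ((S'.1.filter (fun x => x < l.1)).card)) *
          w ⟨S'.1.erase l.1, by rw [Finset.card_erase_of_mem l.2, S'.2]; rfl⟩ := by
  simp only [taylorD, LinearMap.pi_apply, LinearMap.sum_apply, LinearMap.smul_apply,
    LinearMap.proj_apply, smul_eq_mul]

lemma lcmExp_mono {S T : Finset (Fin r)} (h : S ⊆ T) : lcmExp n u S ≤ lcmExp n u T :=
  fun _ => Finset.sup_mono h

/-- `Hom_R(R(-lcm_S), R(-𝟙))_a = R_(a + lcm_S - 𝟙)`. -/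
noncomputable def taylorDeg (a : Fin n → ℤ) (S : Finset (Fin r)) : Fin n → ℤ :=
  fun i => a i + (lcmExp n u S i : ℤ) - 1

lemma taylorDeg_add_eZ (a : Fin n → ℤ) (j : Fin n) (S : Finset (Fin r)) :
    taylorDeg u (a + eZ n j) S = taylorDeg u a S + eZ n j := by
  funext i; simp only [taylorDeg, Pi.add_apply]; ring

lemma mem_taylorPiece_iff {s : ℕ} {a : Fin n → ℤ} {p : TaylorDual k n (r := r) s} :
    p ∈ taylorPiece k n u s a ↔ ∀ S, p S ∈ RPiece k n (taylorDeg u a S.1) := by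
  rw [taylorPiece, Submodule.mem_pi]
  exact ⟨fun h S => h S trivial, fun h S _ => h S⟩

noncomputable def taylorProj (s : ℕ) (a : Fin n → ℤ) (w : TaylorDual k n (r := r) s) :
    TaylorDual k n (r := r) s :=
  fun S => homogProj (taylorDeg u a S.1) (w S)

lemma taylorProj_mem (s : ℕ) (a : Fin n → ℤ) (w : TaylorDual k n (r := r) s) :
    taylorProj u s a w ∈ taylorPiece k n u s a :=
  mem_taylorPiece_iff u |>.2 fun _ => homogProj_mem _ _

lemma taylorProj_eq_self {s : ℕ} {a : Fin n → ℤ} {w : TaylorDual k n (r := r) s}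
    (hw : w ∈ taylorPiece k n u s a) : taylorProj u s a w = w :=
  funext fun S => homogProj_eq_self ((mem_taylorPiece_iff u).1 hw S)

/-- The differential is homogeneous of degree `0`: each entry `±x^(lcm S' - lcm (S' \ {l}))`
shifts the multidegree exactly as the grading of the target requires. -/
lemma taylorD_taylorProj (s : ℕ) (a : Fin n → ℤ) (w : TaylorDual k n (r := r) s) :
    taylorD k n u s (taylorProj u s a w) = taylorProj u (s + 1) a (taylorD k n u s w) := by
  funext S'
  simp only [taylorProj, taylorD_apply, map_sum]
  refine Finset.sum_congr rfl fun l _ => (homogProj_monomial_mul _ _ _ fun i => ?_).symm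
  have := lcmExp_mono u (Finset.erase_subset l.1 S'.1) i
  simp only [taylorDeg, Finsupp.tsub_apply]
  omega

lemma X_smul_mem_taylorPiece {s : ℕ} {a : Fin n → ℤ} (j : Fin n)
    {p : TaylorDual k n (r := r) s} (hp : p ∈ taylorPiece k n u s a) :
    (X j : MvPolynomial (Fin n) k) • p ∈ taylorPiece k n u s (a + eZ n j) :=
  (mem_taylorPiece_iff u).2 fun S => by
    rw [taylorDeg_add_eZ]
    exact X_mul_mem_RPiece j ((mem_taylorPiece_iff u).1 hp S)

lemma exists_X_smul_eq_of_mem_taylorPiece {s : ℕ} {a : Fin n → ℤ} {j : Fin n} (hj : 0 < a j)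
    {q : TaylorDual k n (r := r) s} (hq : q ∈ taylorPiece k n u s (a + eZ n j)) :
    ∃ p ∈ taylorPiece k n u s a, (X j : MvPolynomial (Fin n) k) • p = q := by
  have hdiv : ∀ S : {S : Finset (Fin r) // S.card = s},
      ∃ h ∈ RPiece k n (taylorDeg u a S.1), (X j : MvPolynomial (Fin n) k) * h = q S :=
    fun S => by
      refine exists_X_mul_eq_of_mem_RPiece ?_ (taylorDeg_add_eZ u a j S.1 ▸
        (mem_taylorPiece_iff u).1 hq S)
      simp only [taylorDeg]
      omega
  choose p hp hXp using hdiv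
  exact ⟨p, (mem_taylorPiece_iff u).2 hp, funext hXp⟩

lemma mem_extB_of_X_smul_mem {i : ℕ} {a : Fin n → ℤ} {j : Fin n} (hj : 0 < a j)
    {ζ : TaylorDual k n (r := r) i} (hζ : ζ ∈ taylorPiece k n u i a)
    (hB : (X j : MvPolynomial (Fin n) k) • ζ ∈ extB k n u i) : ζ ∈ extB k n u i := by
  cases i with
  | zero =>
    simpa [extB] using hB
  | succ s =>
    obtain ⟨w, hw⟩ := hB
    obtain ⟨v, -, hv⟩ := exists_X_smul_eq_of_mem_taylorPiece u hj (taylorProj_mem u s _ w)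
    refine ⟨v, (smul_right_inj (X_ne_zero (R := k) j)).1 ?_⟩
    rw [← map_smul, hv, taylorD_taylorProj, hw,
      taylorProj_eq_self u (X_smul_mem_taylorPiece u j hζ)]

end TaylorDual

section Ext

variable {r : ℕ} (u : Fin r → (Fin n →₀ ℕ))

noncomputable def extMk (i : ℕ) : extZ k n u i →ₗ[MvPolynomial (Fin n) k] ExtMod k n u i :=
  Submodule.mkQ (Submodule.comap (extZ k n u i).subtype (extB k n u i ⊓ extZ k n u i))

lemma extMk_eq_zero_iff {i : ℕ} (z : extZ k n u i) :
    extMk u i z = 0 ↔ (z : TaylorDual k n (r := r) i) ∈ extB k n u i :=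
  (Submodule.Quotient.mk_eq_zero _).trans ⟨fun h => h.1, fun h => ⟨h, z.2⟩⟩

lemma mem_extPiece_iff {i : ℕ} {a : Fin n → ℤ} {y : ExtMod k n u i} :
    y ∈ extPiece k n u i a ↔
      ∃ z : extZ k n u i, (z : TaylorDual k n (r := r) i) ∈ taylorPiece k n u i a ∧
        extMk u i z = y :=
  Iff.rfl

lemma X_smul_mem_extPiece {i : ℕ} {a : Fin n → ℤ} (j : Fin n) {y : ExtMod k n u i}
    (hy : y ∈ extPiece k n u i a) :
    (X j : MvPolynomial (Fin n) k) • y ∈ extPiece k n u i (a + eZ n j) := by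
  obtain ⟨z, hz, rfl⟩ := (mem_extPiece_iff u).1 hy
  exact (mem_extPiece_iff u).2 ⟨_, X_smul_mem_taylorPiece u j hz, map_smul _ _ _⟩

lemma eq_zero_of_X_smul_eq_zero {i : ℕ} {a : Fin n → ℤ} {j : Fin n} (hj : 0 < a j)
    {y : ExtMod k n u i} (hy : y ∈ extPiece k n u i a)
    (h0 : (X j : MvPolynomial (Fin n) k) • y = 0) : y = 0 := by
  obtain ⟨z, hz, rfl⟩ := (mem_extPiece_iff u).1 hy
  rw [← map_smul, extMk_eq_zero_iff] at h0
  exact (extMk_eq_zero_iff u z).2 (mem_extB_of_X_smul_mem u hj hz h0)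

lemma exists_X_smul_eq_of_mem_extPiece {i : ℕ} {a : Fin n → ℤ} {j : Fin n} (hj : 0 < a j)
    {z : ExtMod k n u i} (hz : z ∈ extPiece k n u i (a + eZ n j)) :
    ∃ y ∈ extPiece k n u i a, (X j : MvPolynomial (Fin n) k) • y = z := by
  obtain ⟨w, hw, rfl⟩ := (mem_extPiece_iff u).1 hz
  obtain ⟨v, hv, hXv⟩ := exists_X_smul_eq_of_mem_taylorPiece u hj hw
  have hv_cocycle : v ∈ extZ k n u i := (smul_right_inj (X_ne_zero (R := k) j)).1 <| by
    rw [← map_smul, hXv, smul_zero]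
    exact w.2
  refine ⟨extMk u i ⟨v, hv_cocycle⟩, (mem_extPiece_iff u).2 ⟨_, hv, rfl⟩, ?_⟩
  rw [← map_smul]
  exact congrArg (extMk u i) (Subtype.ext hXv)

end Ext

end Paper

open MvPolynomial Paper in
theorem stmt_5_general {k : Type} [Field k] {n : ℕ}
    {r : ℕ} (u : Fin r → (Fin n →₀ ℕ))
    (a : Fin n → ℤ) (j : Fin n)
    -- `j ∈ supp (a⁺)`:
    (hj : 0 < a j) (i : ℕ) :
    -- Then multiplication by `x j` is a bijection
    -- `Ext^i_R(R/I, ω_R)_a → Ext^i_R(R/I, ω_R)_{a + e j}`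
    -- (where `ExtMod k n u i` is `Ext^i_R(R/I, ω_R)`, computed from the Taylor
    -- resolution of `R/I` on the generators `x^(u l)`, with its natural
    -- `ℤⁿ`-grading `extPiece`); that is, it maps the degree `a` component into the
    -- degree `a + e j` component, …
    (∀ y ∈ extPiece k n u i a,
        (X j : MvPolynomial (Fin n) k) • y ∈ extPiece k n u i (a + eZ n j)) ∧
      -- … injectively …
      (∀ y₁ ∈ extPiece k n u i a, ∀ y₂ ∈ extPiece k n u i a,
        (X j : MvPolynomial (Fin n) k) • y₁ = (X j : MvPolynomial (Fin n) k) • y₂ →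
          y₁ = y₂) ∧
      -- … and surjectively:
      (∀ z ∈ extPiece k n u i (a + eZ n j),
        ∃ y ∈ extPiece k n u i a, (X j : MvPolynomial (Fin n) k) • y = z) :=
  ⟨fun _ hy => X_smul_mem_extPiece u j hy,
    fun _ hy₁ _ hy₂ h => sub_eq_zero.1 <|
      eq_zero_of_X_smul_eq_zero u hj (sub_mem hy₁ hy₂) (by rw [smul_sub, h, sub_self]),
    fun _ hz => exists_X_smul_eq_of_mem_extPiece u hj hz⟩

set_option synthInstance.maxHeartbeats 1000000 in
set_option maxHeartbeats 1000000 in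
open MvPolynomial Paper in
theorem stmt_5 {k : Type} [Field k] {n : ℕ}
    (I : Ideal (MvPolynomial (Fin n) k)) {r : ℕ} (u : Fin r → (Fin n →₀ ℕ))
    -- `I` is the monomial ideal generated by the monomials `x^(u l)`:
    (hu : I = Ideal.span {g : MvPolynomial (Fin n) k | ∃ l, g = monomial (u l) (1 : k)})
    (a : Fin n → ℤ) (j : Fin n)
    -- `j ∈ supp (a⁺)`:
    (hj : 0 < a j) (i : ℕ) :
    -- Then multiplication by `x j` is a bijection
    -- `Ext^i_R(R/I, ω_R)_a → Ext^i_R(R/I, ω_R)_{a + e j}`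
    -- (where `ExtMod k n u i` is `Ext^i_R(R/I, ω_R)`, computed from the Taylor
    -- resolution of `R/I` on the generators `x^(u l)`, with its natural
    -- `ℤⁿ`-grading `extPiece`); that is, it maps the degree `a` component into the
    -- degree `a + e j` component, …
    (∀ y ∈ extPiece k n u i a,
        (X j : MvPolynomial (Fin n) k) • y ∈ extPiece k n u i (a + eZ n j)) ∧
      -- … injectively …
      (∀ y₁ ∈ extPiece k n u i a, ∀ y₂ ∈ extPiece k n u i a,
        (X j : MvPolynomial (Fin n) k) • y₁ = (X j : MvPolynomial (Fin n) k) • y₂ →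
          y₁ = y₂) ∧
      -- … and surjectively:
      (∀ z ∈ extPiece k n u i (a + eZ n j),
        ∃ y ∈ extPiece k n u i a, (X j : MvPolynomial (Fin n) k) • y = z) :=
  stmt_5_general u a j hj i
end

section
/- Let $M$ be a finitely generated $\mathbb{Z}^n$-graded module over $R = k[x_1,\ldots,x_n]$ with a Stanley decomposition $\mathcal{S} = \{(m_1,G_1),\ldots,(m_p,G_p)\}$ such that each $(\deg m_i)^+$ is square-free, $G_i = \{x_l : l \in \mathrm{supp}((\deg m_i)^+)\}$, and the pairs are ordered so that $|\deg m_1| \ge \cdots \ge |\deg m_p|$ (total degrees). Then the $k$-span of $\{m_1,\ldots,m_p\}$ in $M$ equals the $k$-span of the set of all homogeneous elements $m \in M$ whose degree has square-free positive part $(\deg m)^+$. -/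
/-!
Common definitions: `ℤⁿ`-graded modules over `R = k[x_1, …, x_n]`, Stanley
decompositions, the Čech complex on `x_1, …, x_n` (computing local cohomology
`H^i_𝔪` and, via the standard characterization, Castelnuovo–Mumford regularity),
and `Ext^i_R(R/I, ω_R)` for a monomial ideal `I`, computed with its natural
`ℤⁿ`-grading from the Taylor complex, which is a graded free resolution of `R/I`
on a chosen set of monomial generators of `I`.
-/

open MvPolynomial

/-! Write a homogeneous `x` of degree `a ≤ 1` as a combination of the elements `u • m i`
spanning the Stanley spaces and project onto degree `a`. A term `u • m i` survives only if `d i + u = a`; but every variable of `u`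
lies in `G i`, where `d i` is already `1`, so `u = 0` and the term is `m i` itself. -/

open MvPolynomial Paper

theorem DirectSum.IsInternal.mem_span_inter_of_mem_span_s7 {R M ι : Type*} [Semiring R]
    [AddCommMonoid M] [Module R M] [DecidableEq ι] {A : ι → Submodule R M}
    (h : DirectSum.IsInternal A) {S : Set M} (hS : ∀ y ∈ S, ∃ b, y ∈ A b) {a : ι} {x : M}
    (hxa : x ∈ A a) (hxS : x ∈ Submodule.span R S) : x ∈ Submodule.span R (S ∩ A a) := by
  let e := LinearEquiv.ofBijective (DirectSum.coeLinearMap A) h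
  let π : M →ₗ[R] M := (A a).subtype ∘ₗ DirectSum.component R ι (fun b => A b) a ∘ₗ e.symm
  have hπ_same {y : M} (hy : y ∈ A a) : π y = y := by
    change ((e.symm y a : A a) : M) = y
    rw [h.ofBijective_coeLinearMap_of_mem hy]
  have hπ_ne {b : ι} {y : M} (hb : b ≠ a) (hy : y ∈ A b) : π y = 0 := by
    change ((e.symm y a : A a) : M) = 0
    rw [h.ofBijective_coeLinearMap_of_mem_ne hb hy, ZeroMemClass.coe_zero]
  have hmap : π x ∈ (Submodule.span R S).map π := Submodule.mem_map_of_mem hxS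
  rw [hπ_same hxa, Submodule.map_span] at hmap
  refine Submodule.span_le.2 ?_ hmap
  rintro _ ⟨y, hyS, rfl⟩
  obtain ⟨b, hyb⟩ := hS y hyS
  by_cases hba : b = a
  · subst hba
    rw [hπ_same hyb]
    exact Submodule.subset_span ⟨hyS, hyb⟩
  · rw [hπ_ne hba hyb]
    exact Submodule.zero_mem _

section MonomialAction

variable {k : Type*} [CommSemiring k] {n : ℕ} {M : Type*} [AddCommMonoid M]
  [Module (MvPolynomial (Fin n) k) M] [Module k M] {gr : (Fin n → ℤ) → Submodule k M}

theorem X_pow_smul_mem_of_compat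
    (hgr : ∀ (j : Fin n) (a : Fin n → ℤ), ∀ x ∈ gr a,
      (X j : MvPolynomial (Fin n) k) • x ∈ gr (a + eZ n j))
    (j : Fin n) (b : ℕ) {a : Fin n → ℤ} {x : M} (hx : x ∈ gr a) :
    (X j : MvPolynomial (Fin n) k) ^ b • x ∈ gr (a + b • eZ n j) := by
  induction b with
  | zero => simpa using hx
  | succ b ih =>
    rw [pow_succ', mul_smul, succ_nsmul, ← add_assoc]
    exact hgr j _ _ ih

theorem monomial_smul_mem_of_compat
    (hgr : ∀ (j : Fin n) (a : Fin n → ℤ), ∀ x ∈ gr a,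
      (X j : MvPolynomial (Fin n) k) • x ∈ gr (a + eZ n j))
    (u : Fin n →₀ ℕ) {a : Fin n → ℤ} {x : M} (hx : x ∈ gr a) :
    (monomial u (1 : k) : MvPolynomial (Fin n) k) • x ∈ gr (a + fun l => (u l : ℤ)) := by
  induction u using Finsupp.induction generalizing a x with
  | zero => simpa [show (fun _ : Fin n => (0 : ℤ)) = 0 from rfl] using hx
  | single_add j b f _ _ ih =>
    rw [monomial_single_add, mul_smul]
    convert X_pow_smul_mem_of_compat hgr j b (ih hx) using 2
    funext l
    simp only [Pi.add_apply, Pi.smul_apply, Finsupp.add_apply, Finsupp.single_apply, eZ]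
    split_ifs <;> subst_vars <;> simp_all

end MonomialAction

theorem Paper.IsStanleyDecomposition.span_monomial_smul_eq_top {k : Type} [Field k] {n : ℕ}
    {M : Type} [AddCommGroup M] [Module (MvPolynomial (Fin n) k) M] [Module k M]
    [IsScalarTower k (MvPolynomial (Fin n) k) M] {p : ℕ} {m : Fin p → M}
    {G : Fin p → Set (Fin n)} (hSD : IsStanleyDecomposition k n M m G) :
    Submodule.span k (⋃ i, {y | ∃ u : Fin n →₀ ℕ, ↑u.support ⊆ G i ∧
      y = (monomial u (1 : k) : MvPolynomial (Fin n) k) • m i}) = ⊤ := by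
  rw [Submodule.span_iUnion]
  exact hSD.2.submodule_iSup_eq_top

theorem Finsupp.eq_zero_of_support_subset_pos {α : Type*} {u : α →₀ ℕ} {d : α → ℤ}
    (hu : ↑u.support ⊆ {l | 0 < d l}) (hdu : ∀ l, d l + u l ≤ 1) : u = 0 := by
  ext l
  rw [Finsupp.coe_zero, Pi.zero_apply]
  by_contra hl
  have hpos : 0 < d l := hu (Finsupp.mem_support_iff.2 hl)
  have := hdu l
  omega

open MvPolynomial Paper in
theorem stmt_7_general {k : Type} [Field k] {n : ℕ}
    (M : Type) [AddCommGroup M] [Module (MvPolynomial (Fin n) k) M]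
    [Module k M] [IsScalarTower k (MvPolynomial (Fin n) k) M]
    -- `gr` is the `ℤⁿ`-grading of `M`
    (gr : (Fin n → ℤ) → Submodule k M)
    (hgr_internal : DirectSum.IsInternal gr)
    (hgr_compat : ∀ (j : Fin n) (a : Fin n → ℤ), ∀ x ∈ gr a,
      (X j : MvPolynomial (Fin n) k) • x ∈ gr (a + eZ n j))
    -- a Stanley decomposition `{(m i, G i)}` of `M` …
    {p : ℕ} (m : Fin p → M) (G : Fin p → Set (Fin n)) (d : Fin p → (Fin n → ℤ))
    (hSD : IsStanleyDecomposition k n M m G)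
    -- … by homogeneous elements `m i` of degree `d i`,
    (hdeg : ∀ i, m i ∈ gr (d i))
    -- with `(d i)⁺` square-free,
    (hsf : ∀ i l, d i l ≤ 1)
    -- `G i = supp ((d i)⁺)`,
    (hG : ∀ i, G i = {l | 0 < d i l}) :
    -- Then the span of the `m i` is the span of all homogeneous elements of `M`
    -- whose degree has square-free positive part:
    Submodule.span k (Set.range m) =
      Submodule.span k {x : M | ∃ a : Fin n → ℤ, (∀ l, a l ≤ 1) ∧ x ∈ gr a} := by
  refine le_antisymm (Submodule.span_le.2 ?_) (Submodule.span_le.2 ?_)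
  · rintro _ ⟨i, rfl⟩
    exact Submodule.subset_span ⟨d i, hsf i, hdeg i⟩
  rintro x ⟨a, ha, hxa⟩
  have hx := hSD.span_monomial_smul_eq_top ▸ Submodule.mem_top (x := x)
  refine Submodule.span_le.2 ?_ (hgr_internal.mem_span_inter_of_mem_span_s7 ?_ hxa hx)
  · rintro _ ⟨hy, hya⟩
    obtain ⟨i, u, hu, rfl⟩ := Set.mem_iUnion.1 hy
    have hyd := monomial_smul_mem_of_compat hgr_compat u (hdeg i)
    by_cases hda : (d i + fun l => (u l : ℤ)) = a
    · have hu0 : u = 0 := Finsupp.eq_zero_of_support_subset_pos (hG i ▸ hu)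
        fun l => by simpa [← hda] using ha l
      simpa [hu0] using Submodule.subset_span (Set.mem_range_self i)
    · rw [(Submodule.disjoint_def.1
        (hgr_internal.submodule_iSupIndep.pairwiseDisjoint hda) _ hyd hya)]
      exact Submodule.zero_mem _
  · rintro _ hy
    obtain ⟨i, u, -, rfl⟩ := Set.mem_iUnion.1 hy
    exact ⟨_, monomial_smul_mem_of_compat hgr_compat u (hdeg i)⟩

open MvPolynomial Paper in
theorem stmt_7 {k : Type} [Field k] {n : ℕ}
    (M : Type) [AddCommGroup M] [Module (MvPolynomial (Fin n) k) M]
    [Module k M] [IsScalarTower k (MvPolynomial (Fin n) k) M]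
    [Module.Finite (MvPolynomial (Fin n) k) M]
    -- `gr` is the `ℤⁿ`-grading of `M`
    (gr : (Fin n → ℤ) → Submodule k M)
    (hgr_internal : DirectSum.IsInternal gr)
    (hgr_compat : ∀ (j : Fin n) (a : Fin n → ℤ), ∀ x ∈ gr a,
      (X j : MvPolynomial (Fin n) k) • x ∈ gr (a + eZ n j))
    -- a Stanley decomposition `{(m i, G i)}` of `M` …
    {p : ℕ} (m : Fin p → M) (G : Fin p → Set (Fin n)) (d : Fin p → (Fin n → ℤ))
    (hSD : IsStanleyDecomposition k n M m G)
    -- … by homogeneous elements `m i` of degree `d i`,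
    (hdeg : ∀ i, m i ∈ gr (d i))
    -- with `(d i)⁺` square-free,
    (hsf : ∀ i l, d i l ≤ 1)
    -- `G i = supp ((d i)⁺)`,
    (hG : ∀ i, G i = {l | 0 < d i l})
    -- and the pairs ordered by weakly decreasing total degree:
    (hord : ∀ i j : Fin p, i ≤ j → (∑ l, d j l) ≤ (∑ l, d i l)) :
    -- Then the span of the `m i` is the span of all homogeneous elements of `M`
    -- whose degree has square-free positive part:
    Submodule.span k (Set.range m) =
      Submodule.span k {x : M | ∃ a : Fin n → ℤ, (∀ l, a l ≤ 1) ∧ x ∈ gr a} :=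
  stmt_7_general M gr hgr_internal hgr_compat m G d hSD hdeg hsf hG
end
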